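/- arXiv:2305.07023 — 5 statements merged into one kernel-verified Lean document; each statement's English description precedes it below -/
import Mathlib

section
/- The square root of 5 does not belong to the cyclotomic field Q(ζ) where ζ is a primitive 2^(r+1)-th root of unity, for any positive integer r. -/
set_option maxHeartbeats 1000000
set_option synthInstance.maxHeartbeats 400000

open Polynomial IntermediateField Complex

/-- √5 does not belong to the cyclotomic field ℚ(ζ_{2^{r+1}})
(realized inside ℂ as the field generated over ℚ by the primitive
2^{r+1}-th root of unity ζ = e^{2πi/2^{r+1}}), for any positive integer r. -/
theorem sqrt_five_not_mem_two_power_cyclotomic (r : ℕ) (hr : 0 < r) :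
    (Real.sqrt 5 : ℂ) ∉
      IntermediateField.adjoin ℚ
        ({Complex.exp (2 * Real.pi * Complex.I / (2 ^ (r + 1)))} : Set ℂ) := by
  intro hmem
  set n : ℕ := 2 ^ (r + 1) with hn
  have hn0 : n ≠ 0 := by positivity
  have hcast : ((n : ℂ)) = (2 : ℂ) ^ (r + 1) := by push_cast [hn]; ring
  set ζ : ℂ := Complex.exp (2 * Real.pi * Complex.I / (2 ^ (r + 1))) with hζdef
  have hζ : IsPrimitiveRoot ζ n := by
    have := Complex.isPrimitiveRoot_exp n hn0
    rwa [hcast] at this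
  set η : ℂ := Complex.exp (2 * Real.pi * Complex.I / 5) with hηdef
  have hη : IsPrimitiveRoot η 5 := by
    have := Complex.isPrimitiveRoot_exp 5 (by norm_num)
    simpa using this
  have h5 : η ^ 5 = 1 := hη.pow_eq_one
  have hsum : 1 + η + η ^ 2 + η ^ 3 + η ^ 4 = 0 := by
    have := hη.geom_sum_eq_zero (by norm_num)
    simp [Finset.sum_range_succ] at this
    linear_combination this
  set c : ℂ := η + η ^ 4 with hcdef
  have hs5 : (Real.sqrt 5 : ℂ) ^ 2 = 5 := by
    rw [← Complex.ofReal_pow, Real.sq_sqrt (by norm_num : (5:ℝ) ≥ 0)]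
    norm_num
  have hc5 : (2 * c + 1) ^ 2 = (Real.sqrt 5 : ℂ) ^ 2 := by
    rw [hs5]; linear_combination (4 * η ^ 3 + 8) * h5 + 4 * hsum
  set K : IntermediateField ℚ ℂ := IntermediateField.adjoin ℚ ({ζ} : Set ℂ) with hK
  have h2K : (2:ℂ) ∈ K := by
    rw [← one_add_one_eq_two]; exact K.add_mem K.one_mem K.one_mem
  have hcK : c ∈ K := by
    have := sq_eq_sq_iff_eq_or_eq_neg.mp hc5
    rcases this with h | h
    · have : c = ((Real.sqrt 5 : ℂ) - 1) / 2 := by linear_combination h / 2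
      rw [this]
      exact K.div_mem (K.sub_mem hmem K.one_mem) h2K
    · have : c = (-(Real.sqrt 5 : ℂ) - 1) / 2 := by linear_combination h / 2
      rw [this]
      exact K.div_mem (K.sub_mem (K.neg_mem hmem) K.one_mem) h2K
  have hζK : ζ ∈ K := IntermediateField.subset_adjoin _ _ rfl
  have hζint : IsIntegral ℚ ζ := (hζ.isIntegral (Nat.pos_of_ne_zero hn0)).tower_top
  have hηintK : IsIntegral K η := (hη.isIntegral (by norm_num)).tower_top
  haveI : FiniteDimensional ℚ K := IntermediateField.adjoin.finiteDimensional hζint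
  -- finrank of K
  have hforK : Module.finrank ℚ K = 2 ^ r := by
    rw [hK, IntermediateField.adjoin.finrank hζint,
      ← Polynomial.cyclotomic_eq_minpoly_rat hζ (Nat.pos_of_ne_zero hn0), natDegree_cyclotomic,
      hn, Nat.totient_prime_pow Nat.prime_two (Nat.succ_pos r)]
    simp
  -- M = K(η)
  set M : IntermediateField K ℂ := IntermediateField.adjoin K ({η} : Set ℂ) with hM
  haveI : FiniteDimensional K M := IntermediateField.adjoin.finiteDimensional hηintK
  -- degree of M over K is at most 2
  have hforM : Module.finrank K M ≤ 2 := by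
    rw [hM, IntermediateField.adjoin.finrank hηintK]
    have hpne : (X ^ 2 - C (⟨c, hcK⟩ : K) * X + 1 : K[X]) ≠ 0 := by
      intro h
      have := congrArg (fun p => Polynomial.coeff p 2) h
      simp [coeff_one] at this
    have haev : Polynomial.aeval η (X ^ 2 - C (⟨c, hcK⟩ : K) * X + 1 : K[X]) = 0 := by
      have halg : (algebraMap K ℂ) (⟨c, hcK⟩ : K) = c := rfl
      simp [halg]
      linear_combination -h5
    have hdeg := minpoly.degree_le_of_ne_zero K η hpne haev
    have hdeg2 : (X ^ 2 - C (⟨c, hcK⟩ : K) * X + 1 : K[X]).degree ≤ 2 := by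
      compute_degree
    exact natDegree_le_iff_degree_le.mpr (le_trans hdeg hdeg2)
  have hζM : ζ ∈ M := by
    exact M.algebraMap_mem ⟨ζ, hζK⟩
  have hηM : η ∈ M := IntermediateField.subset_adjoin _ _ rfl
  have hζM' : IsPrimitiveRoot (⟨ζ, hζM⟩ : M) n :=
    (IsPrimitiveRoot.coe_submonoidClass_iff).mp hζ
  have hηM' : IsPrimitiveRoot (⟨η, hηM⟩ : M) 5 :=
    (IsPrimitiveRoot.coe_submonoidClass_iff).mp hη
  haveI : FiniteDimensional ℚ M := Module.Finite.trans K M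
  have hcop : Nat.Coprime n 5 := Nat.Coprime.pow_left _ (by norm_num)
  have hlcm : Nat.lcm n 5 = n * 5 := hcop.lcm_eq_mul
  have hlcmpos : 0 < Nat.lcm n 5 := by
    rw [hlcm]; positivity
  have hlow := IsPrimitiveRoot.lcm_totient_le_finrank hζM' hηM'
    (Polynomial.cyclotomic.irreducible_rat hlcmpos)
  have htot : (Nat.lcm n 5).totient = 2 ^ r * 4 := by
    rw [hlcm, Nat.totient_mul (by exact hcop), hn,
      Nat.totient_prime_pow Nat.prime_two (Nat.succ_pos r),
      Nat.totient_prime (by norm_num : Nat.Prime 5)]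
    norm_num
  have htower : Module.finrank ℚ K * Module.finrank K M = Module.finrank ℚ M :=
    Module.finrank_mul_finrank ℚ K M
  rw [htot] at hlow
  rw [hforK] at htower
  have : (2:ℕ)^r * 4 ≤ 2 ^ r * 2 := by
    calc (2:ℕ)^r * 4 ≤ Module.finrank ℚ M := hlow
    _ = 2 ^ r * Module.finrank K M := htower.symm
    _ ≤ 2 ^ r * 2 := Nat.mul_le_mul_left _ hforM
  have h2r : 0 < 2 ^ r := Nat.pow_pos (by norm_num)
  omega
end

section
/- The matrices 𝖷 = -iX, 𝖹 = -iZ, and 𝖥 = (e^{-iπ/4}/√2)·[[1,-i],[1,i]] generate a subgroup of SU(2) of order 24 isomorphic to SL(2,3) (the binary tetrahedral group). -/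
open Matrix Complex

noncomputable section

def PauliX : Matrix (Fin 2) (Fin 2) ℂ := !![0, 1; 1, 0]
def PauliZ : Matrix (Fin 2) (Fin 2) ℂ := !![1, 0; 0, -1]
def Hadamard : Matrix (Fin 2) (Fin 2) ℂ := (1 / (Real.sqrt 2 : ℂ)) • !![1, 1; 1, -1]
def Sgate : Matrix (Fin 2) (Fin 2) ℂ := !![1, 0; 0, I]

/-- 𝖷 = -iX -/
def Xsf : Matrix (Fin 2) (Fin 2) ℂ := (-I) • PauliX
/-- 𝖹 = -iZ -/
def Zsf : Matrix (Fin 2) (Fin 2) ℂ := (-I) • PauliZ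
/-- 𝖥 = e^{-iπ/4} · H S† -/
def Fsf : Matrix (Fin 2) (Fin 2) ℂ :=
  Complex.exp (-(Real.pi / 4) * I) • (Hadamard * Sgateᴴ)

/-- The generating set {𝖷, 𝖹, 𝖥}, as a subset of the 2×2 unitary group. -/
def tetGens : Set (Matrix.unitaryGroup (Fin 2) ℂ) :=
  {g | (g : Matrix (Fin 2) (Fin 2) ℂ) = Xsf ∨
       (g : Matrix (Fin 2) (Fin 2) ℂ) = Zsf ∨
       (g : Matrix (Fin 2) (Fin 2) ℂ) = Fsf}


-- ===== auxiliary model over ℤ[i] =====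
abbrev SL2 := Matrix.SpecialLinearGroup (Fin 2) GaussianInt
abbrev SL3 := Matrix.SpecialLinearGroup (Fin 2) (ZMod 3)
instance : DecidableEq SL2 := Subtype.instDecidableEq
instance : DecidableEq SL3 := Subtype.instDecidableEq
def e0 : SL2 := ⟨!![⟨1,0⟩, ⟨0,0⟩; ⟨0,0⟩, ⟨1,0⟩], by decide⟩
def e1 : SL2 := ⟨!![⟨0,1⟩, ⟨0,0⟩; ⟨1,-1⟩, ⟨0,-1⟩], by decide⟩
def e2 : SL2 := ⟨!![⟨0,-1⟩, ⟨-1,-1⟩; ⟨0,0⟩, ⟨0,1⟩], by decide⟩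
def e3 : SL2 := ⟨!![⟨0,0⟩, ⟨-1,0⟩; ⟨1,0⟩, ⟨1,0⟩], by decide⟩
def e4 : SL2 := ⟨!![⟨-1,0⟩, ⟨0,0⟩; ⟨0,0⟩, ⟨-1,0⟩], by decide⟩
def e5 : SL2 := ⟨!![⟨1,0⟩, ⟨1,-1⟩; ⟨-1,-1⟩, ⟨-1,0⟩], by decide⟩
def e6 : SL2 := ⟨!![⟨0,0⟩, ⟨0,-1⟩; ⟨0,-1⟩, ⟨-1,0⟩], by decide⟩
def e7 : SL2 := ⟨!![⟨-1,0⟩, ⟨-1,1⟩; ⟨1,1⟩, ⟨1,0⟩], by decide⟩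
def e8 : SL2 := ⟨!![⟨-1,-1⟩, ⟨-1,0⟩; ⟨0,1⟩, ⟨0,1⟩], by decide⟩
def e9 : SL2 := ⟨!![⟨-1,1⟩, ⟨0,1⟩; ⟨1,0⟩, ⟨0,-1⟩], by decide⟩
def e10 : SL2 := ⟨!![⟨-1,0⟩, ⟨-1,0⟩; ⟨1,0⟩, ⟨0,0⟩], by decide⟩
def e11 : SL2 := ⟨!![⟨0,-1⟩, ⟨0,0⟩; ⟨-1,1⟩, ⟨0,1⟩], by decide⟩
def e12 : SL2 := ⟨!![⟨0,1⟩, ⟨1,1⟩; ⟨0,0⟩, ⟨0,-1⟩], by decide⟩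
def e13 : SL2 := ⟨!![⟨0,0⟩, ⟨1,0⟩; ⟨-1,0⟩, ⟨-1,0⟩], by decide⟩
def e14 : SL2 := ⟨!![⟨1,-1⟩, ⟨0,-1⟩; ⟨-1,0⟩, ⟨0,1⟩], by decide⟩
def e15 : SL2 := ⟨!![⟨0,-1⟩, ⟨0,-1⟩; ⟨-1,0⟩, ⟨-1,1⟩], by decide⟩
def e16 : SL2 := ⟨!![⟨0,0⟩, ⟨0,1⟩; ⟨0,1⟩, ⟨1,0⟩], by decide⟩
def e17 : SL2 := ⟨!![⟨-1,0⟩, ⟨0,1⟩; ⟨0,1⟩, ⟨0,0⟩], by decide⟩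
def e18 : SL2 := ⟨!![⟨1,1⟩, ⟨1,0⟩; ⟨0,-1⟩, ⟨0,-1⟩], by decide⟩
def e19 : SL2 := ⟨!![⟨0,1⟩, ⟨1,0⟩; ⟨0,-1⟩, ⟨-1,-1⟩], by decide⟩
def e20 : SL2 := ⟨!![⟨1,0⟩, ⟨1,0⟩; ⟨-1,0⟩, ⟨0,0⟩], by decide⟩
def e21 : SL2 := ⟨!![⟨0,-1⟩, ⟨-1,0⟩; ⟨0,1⟩, ⟨1,1⟩], by decide⟩
def e22 : SL2 := ⟨!![⟨0,1⟩, ⟨0,1⟩; ⟨1,0⟩, ⟨1,-1⟩], by decide⟩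
def e23 : SL2 := ⟨!![⟨1,0⟩, ⟨0,-1⟩; ⟨0,-1⟩, ⟨0,0⟩], by decide⟩
def L : List SL2 := [e0, e1, e2, e3, e4, e5, e6, e7, e8, e9, e10, e11, e12, e13, e14, e15, e16, e17, e18, e19, e20, e21, e22, e23]
def s0 : SL3 := ⟨!![1, 0; 0, 1], by decide⟩
def s1 : SL3 := ⟨!![1, 2; 2, 2], by decide⟩
def s2 : SL3 := ⟨!![0, 1; 2, 0], by decide⟩
def s3 : SL3 := ⟨!![2, 1; 0, 2], by decide⟩
def s4 : SL3 := ⟨!![2, 0; 0, 2], by decide⟩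
def s5 : SL3 := ⟨!![1, 1; 1, 2], by decide⟩
def s6 : SL3 := ⟨!![2, 2; 1, 0], by decide⟩
def s7 : SL3 := ⟨!![2, 2; 2, 1], by decide⟩
def s8 : SL3 := ⟨!![0, 2; 1, 2], by decide⟩
def s9 : SL3 := ⟨!![1, 0; 1, 1], by decide⟩
def s10 : SL3 := ⟨!![1, 1; 0, 1], by decide⟩
def s11 : SL3 := ⟨!![2, 1; 1, 1], by decide⟩
def s12 : SL3 := ⟨!![0, 2; 1, 0], by decide⟩
def s13 : SL3 := ⟨!![1, 2; 0, 1], by decide⟩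
def s14 : SL3 := ⟨!![2, 0; 2, 2], by decide⟩
def s15 : SL3 := ⟨!![1, 0; 2, 1], by decide⟩
def s16 : SL3 := ⟨!![1, 1; 2, 0], by decide⟩
def s17 : SL3 := ⟨!![0, 1; 2, 2], by decide⟩
def s18 : SL3 := ⟨!![0, 1; 2, 1], by decide⟩
def s19 : SL3 := ⟨!![2, 1; 2, 0], by decide⟩
def s20 : SL3 := ⟨!![2, 2; 0, 2], by decide⟩
def s21 : SL3 := ⟨!![1, 2; 1, 0], by decide⟩
def s22 : SL3 := ⟨!![2, 0; 1, 2], by decide⟩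
def s23 : SL3 := ⟨!![0, 2; 1, 1], by decide⟩
def L' : List SL3 := [s0, s1, s2, s3, s4, s5, s6, s7, s8, s9, s10, s11, s12, s13, s14, s15, s16, s17, s18, s19, s20, s21, s22, s23]
def tabL : List (List Nat) := [[0, 1, 2, 3, 4, 5, 6, 7, 8, 9, 10, 11, 12, 13, 14, 15, 16, 17, 18, 19, 20, 21, 22, 23], [1, 4, 5, 6, 11, 12, 13, 2, 14, 8, 15, 0, 7, 16, 18, 20, 3, 21, 9, 17, 22, 23, 10, 19], [2, 7, 4, 8, 12, 1, 9, 11, 13, 16, 17, 5, 0, 18, 6, 19, 14, 20, 3, 22, 23, 15, 21, 10], [3, 9, 6, 10, 13, 18, 19, 8, 15, 17, 4, 14, 16, 20, 23, 5, 21, 11, 22, 12, 0, 2, 7, 1], [4, 11, 12, 13, 0, 7, 16, 5, 18, 14, 20, 1, 2, 3, 9, 22, 6, 23, 8, 21, 10, 19, 15, 17], [5, 2, 11, 14, 7, 4, 8, 0, 16, 3, 21, 12, 1, 9, 13, 17, 18, 22, 6, 10, 19, 20, 23, 15], [6, 8, 13, 15, 16, 9, 17, 14, 20, 21, 11, 18,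 3, 22, 19, 12, 23, 0, 10, 7, 1, 5, 2, 4], [7, 12, 1, 9, 5, 0, 18, 4, 6, 13, 19, 2, 11, 14, 3, 23, 8, 15, 16, 20, 21, 10, 17, 22], [8, 16, 9, 17, 18, 3, 22, 13, 19, 20, 12, 6, 14, 23, 10, 1, 15, 5, 21, 0, 2, 4, 11, 7], [9, 13, 18, 19, 14, 16, 20, 6, 23, 15, 5, 3, 8, 21, 22, 0, 10, 2, 17, 11, 7, 1, 4, 12], [10, 17, 19, 4, 20, 22, 12, 15, 5, 11, 13, 23, 21, 0, 1, 18, 2, 14, 7, 16, 3, 6, 8, 9], [11, 0, 7, 16, 1, 2, 3, 12, 9, 18, 22, 4, 5, 6, 8, 10, 13, 19, 14, 23, 15, 17, 20, 21], [12, 5, 0, 18, 2, 11, 14, 1, 3, 6, 23, 7, 4, 8, 16, 21, 9, 10, 13, 15, 17, 22, 19, 20], [13, 14, 16, 20, 3, 8, 21, 18, 22, 23, 0, 9, 6, 10, 17, 7, 19, 1, 15, 2, 4, 12, 5, 11], [14, 3, 8, 21, 9, 6, 10, 16, 17, 22, 7, 13, 18, 19, 15, 4, 20, 12, 23, 1,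 5, 11, 0, 2], [15, 21, 17, 11, 22, 10, 7, 20, 12, 0, 16, 19, 23, 1, 4, 9, 5, 18, 2, 3, 6, 13, 14, 8], [16, 18, 3, 22, 6, 14, 23, 9, 10, 19, 1, 8, 13, 15, 21, 2, 17, 4, 20, 5, 11, 7, 12, 0], [17, 20, 22, 12, 23, 21, 0, 19, 1, 5, 18, 10, 15, 2, 7, 3, 4, 6, 11, 14, 8, 9, 13, 16], [18, 6, 14, 23, 8, 13, 15, 3, 21, 10, 2, 16, 9, 17, 20, 11, 22, 7, 19, 4, 12, 0, 1, 5], [19, 15, 20, 5, 21, 17, 11, 23, 0, 2, 14, 22, 10, 7, 12, 16, 1, 3, 4, 8, 9, 18, 6, 13], [20, 23, 21, 0, 10, 15, 2, 22, 7, 1, 3, 17, 19, 4, 11, 8, 12, 9, 5, 6, 13, 16, 18, 14], [21, 22, 10, 7, 19, 23, 1, 17, 4, 12, 9, 15, 20, 5, 2, 6, 11, 13, 0, 18, 14, 8, 16, 3], [22, 19, 23, 1, 15, 20, 5, 10, 2, 4, 6, 21, 17, 11, 0, 14, 7, 8, 12, 13, 16, 3, 9, 18], [23, 10, 15, 2,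 17, 19, 4, 21, 11, 7, 8, 20, 22, 12, 5, 13, 0, 16, 1, 9, 18, 14, 3, 6]]
def invL : List Nat := [0, 11, 12, 20, 4, 7, 17, 5, 19, 15, 13, 1, 2, 10, 22, 9, 23, 6, 21, 8, 3, 18, 14, 16]
def gX := e1
def gZ := e2
def gF := e3
set_option maxRecDepth 40000
set_option maxHeartbeats 1000000 in
lemma htablt : ∀ i j : Fin 24, (tabL.getD i.val []).getD j.val 0 < 24 := by decide
def tab (i j : Fin 24) : Fin 24 := ⟨(tabL.getD i.val []).getD j.val 0, htablt i j⟩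
lemma hL24 : L.length = 24 := rfl
def lf (i : Fin 24) : SL2 := L.get (Fin.cast hL24.symm i)
lemma lf_mem (i : Fin 24) : lf i ∈ L := List.get_mem L (Fin.cast hL24.symm i)
lemma memL_iff {a : SL2} : a ∈ L ↔ ∃ i : Fin 24, lf i = a := by
  rw [List.mem_iff_get]
  constructor
  · rintro ⟨n, rfl⟩; exact ⟨Fin.cast hL24 n, rfl⟩
  · rintro ⟨i, rfl⟩; exact ⟨Fin.cast hL24.symm i, rfl⟩
lemma hinvlt : ∀ i : Fin 24, invL.getD i.val 0 < 24 := by decide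
def itab (i : Fin 24) : Fin 24 := ⟨invL.getD i.val 0, hinvlt i⟩
set_option maxHeartbeats 12000000 in
lemma htab : ∀ i j : Fin 24, lf i * lf j = lf (tab i j) := by decide
set_option maxHeartbeats 2000000 in
lemma hitab : ∀ i : Fin 24, lf i * lf (itab i) = 1 := by decide
lemma hw0 : lf 0 = (1 : SL2) := by decide
lemma hw1 : lf 1 = gX := by decide
lemma hw2 : lf 2 = gZ := by decide
lemma hw3 : lf 3 = gF := by decide
lemma hw4 : lf 4 = gX * gX := by decide
lemma hw5 : lf 5 = gX * gZ := by decide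
lemma hw6 : lf 6 = gX * gF := by decide
lemma hw7 : lf 7 = gZ * gX := by decide
lemma hw8 : lf 8 = gZ * gF := by decide
lemma hw9 : lf 9 = gF * gX := by decide
lemma hw10 : lf 10 = gF * gF := by decide
lemma hw11 : lf 11 = gX * gX * gX := by decide
lemma hw12 : lf 12 = gX * gX * gZ := by decide
lemma hw13 : lf 13 = gX * gX * gF := by decide
lemma hw14 : lf 14 = gX * gZ * gF := by decide
lemma hw15 : lf 15 = gX * gF * gF := by decide
lemma hw16 : lf 16 = gZ * gF * gX := by decide
lemma hw17 : lf 17 = gZ * gF * gF := by decide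
lemma hw18 : lf 18 = gF * gX * gZ := by decide
lemma hw19 : lf 19 = gF * gX * gF := by decide
lemma hw20 : lf 20 = gX * gX * gF * gF := by decide
lemma hw21 : lf 21 = gX * gZ * gF * gF := by decide
lemma hw22 : lf 22 = gZ * gF * gX * gF := by decide
lemma hw23 : lf 23 = gF * gX * gZ * gF := by decide
lemma wordmem : ∀ i : Fin 24, lf i ∈ Subgroup.closure ({gX, gZ, gF} : Set SL2) := by
  have hx : gX ∈ Subgroup.closure ({gX, gZ, gF} : Set SL2) := Subgroup.subset_closure (by simp)
  have hz : gZ ∈ Subgroup.closure ({gX, gZ, gF} : Set SL2) := Subgroup.subset_closure (by simp)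
  have hf : gF ∈ Subgroup.closure ({gX, gZ, gF} : Set SL2) := Subgroup.subset_closure (by simp)
  intro i; fin_cases i
  · exact hw0 ▸ one_mem _
  · exact hw1 ▸ hx
  · exact hw2 ▸ hz
  · exact hw3 ▸ hf
  · exact hw4 ▸ (mul_mem hx hx)
  · exact hw5 ▸ (mul_mem hx hz)
  · exact hw6 ▸ (mul_mem hx hf)
  · exact hw7 ▸ (mul_mem hz hx)
  · exact hw8 ▸ (mul_mem hz hf)
  · exact hw9 ▸ (mul_mem hf hx)
  · exact hw10 ▸ (mul_mem hf hf)
  · exact hw11 ▸ (mul_mem (mul_mem hx hx) hx)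
  · exact hw12 ▸ (mul_mem (mul_mem hx hx) hz)
  · exact hw13 ▸ (mul_mem (mul_mem hx hx) hf)
  · exact hw14 ▸ (mul_mem (mul_mem hx hz) hf)
  · exact hw15 ▸ (mul_mem (mul_mem hx hf) hf)
  · exact hw16 ▸ (mul_mem (mul_mem hz hf) hx)
  · exact hw17 ▸ (mul_mem (mul_mem hz hf) hf)
  · exact hw18 ▸ (mul_mem (mul_mem hf hx) hz)
  · exact hw19 ▸ (mul_mem (mul_mem hf hx) hf)
  · exact hw20 ▸ (mul_mem (mul_mem (mul_mem hx hx) hf) hf)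
  · exact hw21 ▸ (mul_mem (mul_mem (mul_mem hx hz) hf) hf)
  · exact hw22 ▸ (mul_mem (mul_mem (mul_mem hz hf) hx) hf)
  · exact hw23 ▸ (mul_mem (mul_mem (mul_mem hf hx) hz) hf)

def T : Subgroup SL2 where
  carrier := {A | A ∈ L}
  one_mem' := hw0 ▸ lf_mem 0
  mul_mem' := by
    rintro a b ha hb
    obtain ⟨i, rfl⟩ := memL_iff.mp ha
    obtain ⟨j, rfl⟩ := memL_iff.mp hb
    exact (htab i j) ▸ lf_mem (tab i j)
  inv_mem' := by
    rintro a ha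
    obtain ⟨i, rfl⟩ := memL_iff.mp ha
    have : (lf i)⁻¹ = lf (itab i) := inv_eq_of_mul_eq_one_right (hitab i)
    exact this ▸ lf_mem (itab i)

lemma mem_T_iff {a : SL2} : a ∈ T ↔ a ∈ L := Iff.rfl

lemma hTclos : Subgroup.closure ({gX, gZ, gF} : Set SL2) = T := by
  apply le_antisymm
  · rw [Subgroup.closure_le]
    rintro x (rfl | rfl | rfl)
    · exact hw1 ▸ lf_mem 1
    · exact hw2 ▸ lf_mem 2
    · exact hw3 ▸ lf_mem 3
  · intro a ha
    obtain ⟨i, rfl⟩ := memL_iff.mp (mem_T_iff.mp ha)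
    exact wordmem i

lemma hL'24 : L'.length = 24 := rfl
def sf (i : Fin 24) : SL3 := L'.get (Fin.cast hL'24.symm i)
def idx (a : SL2) : Fin 24 := ⟨L.idxOf a % 24, Nat.mod_lt _ (by norm_num)⟩
set_option maxRecDepth 40000
set_option maxHeartbeats 2000000 in
lemma hidx : ∀ i : Fin 24, idx (lf i) = i := by decide
set_option maxHeartbeats 4000000 in
lemma hstab : ∀ i j : Fin 24, sf (tab i j) = sf i * sf j := by decide
set_option maxHeartbeats 4000000 in
lemma hsinj : ∀ i j : Fin 24, sf i = sf j → lf i = lf j := by decide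
set_option maxHeartbeats 4000000 in
lemma hssurj : ∀ s : SL3, ∃ i : Fin 24, sf i = s := by decide

def φ : T →* SL3 where
  toFun t := sf (idx t.val)
  map_one' := by
    show sf (idx 1) = 1
    have h0 : (1 : SL2) = lf 0 := hw0.symm
    rw [h0, hidx]
    decide
  map_mul' := by
    rintro ⟨a, ha⟩ ⟨b, hb⟩
    obtain ⟨i, rfl⟩ := memL_iff.mp (mem_T_iff.mp ha)
    obtain ⟨j, rfl⟩ := memL_iff.mp (mem_T_iff.mp hb)
    show sf (idx (lf i * lf j)) = sf (idx (lf i)) * sf (idx (lf j))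
    rw [htab i j, hidx, hidx, hidx, hstab]

lemma φ_bij : Function.Bijective φ := by
  constructor
  · rintro ⟨a, ha⟩ ⟨b, hb⟩ h
    obtain ⟨i, rfl⟩ := memL_iff.mp (mem_T_iff.mp ha)
    obtain ⟨j, rfl⟩ := memL_iff.mp (mem_T_iff.mp hb)
    have h' : sf (idx (lf i)) = sf (idx (lf j)) := h
    rw [hidx, hidx] at h'
    exact Subtype.ext (hsinj i j h')
  · intro s
    obtain ⟨i, hi⟩ := hssurj s
    exact ⟨⟨lf i, mem_T_iff.mpr (lf_mem i)⟩, by show sf (idx (lf i)) = s; rw [hidx]; exact hi⟩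

noncomputable def equivT : T ≃* SL3 := MulEquiv.ofBijective φ φ_bij

def TFin : T ≃ Fin 24 where
  toFun t := idx t.val
  invFun i := ⟨lf i, mem_T_iff.mpr (lf_mem i)⟩
  left_inv := by
    rintro ⟨a, ha⟩
    obtain ⟨i, rfl⟩ := memL_iff.mp (mem_T_iff.mp ha)
    simp [hidx]
  right_inv := by intro i; simp [hidx]

lemma cardT : Nat.card T = 24 := by
  rw [Nat.card_congr TFin]; simp

def M0 : Matrix (Fin 2) (Fin 2) GaussianInt := !![⟨2,0⟩, ⟨1,-1⟩; ⟨1,1⟩, ⟨2,0⟩]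
set_option maxRecDepth 40000 in
set_option maxHeartbeats 2000000 in
lemma hform : ∀ i : Fin 24, star (lf i).val * M0 * (lf i).val = M0 := by decide

def cg : GaussianInt →+* ℂ := GaussianInt.toComplex

def ι : SL2 →* Matrix (Fin 2) (Fin 2) ℂ where
  toFun A := A.val.map cg
  map_one' := Matrix.map_one _ (map_zero cg) (map_one cg)
  map_mul' A B := by
    show (A * B : SL2).val.map cg = _
    rw [Matrix.SpecialLinearGroup.coe_mul, Matrix.map_mul]

def Pc : Matrix (Fin 2) (Fin 2) ℂ := !![1, (1 - I)/2; 0, (1 - I)/2]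
def Qc : Matrix (Fin 2) (Fin 2) ℂ := !![1, -1; 0, 1 + I]
def Mc : Matrix (Fin 2) (Fin 2) ℂ := !![2, 1 - I; 1 + I, 2]

lemma hPQ : Pc * Qc = 1 := by
  ext i j
  fin_cases i <;> fin_cases j <;>
    simp [Pc, Qc, Matrix.mul_apply, Fin.sum_univ_two, Matrix.one_apply] <;>
    field_simp <;> ring_nf <;> simp [Complex.I_sq] <;> ring

lemma hQP : Qc * Pc = 1 := by
  ext i j
  fin_cases i <;> fin_cases j <;>
    simp [Pc, Qc, Matrix.mul_apply, Fin.sum_univ_two, Matrix.one_apply] <;>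
    field_simp <;> ring_nf <;> simp [Complex.I_sq] <;> ring

lemma hMc : M0.map cg = Mc := by
  ext i j
  fin_cases i <;> fin_cases j <;>
    simp [M0, Mc, cg, Matrix.map_apply, GaussianInt.toComplex_def, Complex.ext_iff] <;> norm_num

lemma map_star' (A : Matrix (Fin 2) (Fin 2) GaussianInt) :
    (star A).map cg = star (A.map cg) := by
  ext i j
  simp only [Matrix.map_apply, Matrix.star_apply, Matrix.conjTranspose_apply]
  simp [cg, GaussianInt.toComplex_def, Complex.ext_iff]

lemma hPcstar : star Pc * Pc = (1/2 : ℂ) • Mc := by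
  ext i j
  fin_cases i <;> fin_cases j <;>
    simp [Pc, Mc, Matrix.mul_apply, Fin.sum_univ_two, Matrix.conjTranspose_apply,
      Matrix.smul_apply, Complex.ext_iff, map_ofNat] <;> norm_num

lemma hQcstar : star Qc * ((1/2 : ℂ) • Mc) * Qc = 1 := by
  ext i j
  fin_cases i <;> fin_cases j <;>
    simp [Qc, Mc, Matrix.mul_apply, Fin.sum_univ_two, Matrix.conjTranspose_apply,
      Matrix.smul_apply, Matrix.one_apply, Complex.ext_iff] <;> norm_num

lemma hformC (t : T) : star (ι t.val) * Mc * ι t.val = Mc := by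
  obtain ⟨i, hi⟩ := memL_iff.mp (mem_T_iff.mp t.2)
  have h := hform i
  have := congrArg (fun A => A.map cg) h
  rw [Matrix.map_mul, Matrix.map_mul, map_star', hMc] at this
  show star ((t.val).val.map cg) * Mc * ((t.val).val.map cg) = Mc
  rw [← hi]
  exact this

lemma unit_mem (t : T) : Pc * ι t.val * Qc ∈ Matrix.unitaryGroup (Fin 2) ℂ := by
  have h1 : star (Pc * ι t.val * Qc) * (Pc * ι t.val * Qc) = 1 := by
    have e1 : star (Pc * ι t.val * Qc) = star Qc * (star (ι t.val) * star Pc) := by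
      rw [StarMul.star_mul, StarMul.star_mul]
    rw [e1]
    have : star Qc * (star (ι t.val) * star Pc) * (Pc * ι t.val * Qc)
        = star Qc * (star (ι t.val) * (star Pc * Pc) * ι t.val) * Qc := by
      noncomm_ring
    rw [this, hPcstar]
    have : star (ι t.val) * ((1/2 : ℂ) • Mc) * ι t.val
        = (1/2 : ℂ) • (star (ι t.val) * Mc * ι t.val) := by
      rw [Matrix.mul_smul, Matrix.smul_mul]
    rw [this, hformC, ← hQcstar]
  rw [Matrix.mem_unitaryGroup_iff, ← mul_eq_one_comm]
  exact h1

def Θ : T →* Matrix.unitaryGroup (Fin 2) ℂ where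
  toFun t := ⟨Pc * ι t.val * Qc, unit_mem t⟩
  map_one' := by
    apply Subtype.ext
    show Pc * ι 1 * Qc = 1
    rw [map_one ι, Matrix.mul_one, hPQ]
  map_mul' a b := by
    apply Subtype.ext
    show Pc * ι (a.val * b.val) * Qc = (Pc * ι a.val * Qc) * (Pc * ι b.val * Qc)
    rw [map_mul ι]
    have : (Pc * ι a.val * Qc) * (Pc * ι b.val * Qc)
        = Pc * ι a.val * (Qc * Pc) * ι b.val * Qc := by noncomm_ring
    rw [this, hQP, Matrix.mul_one]
    noncomm_ring

lemma Θ_inj : Function.Injective Θ := by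
  intro a b h
  have h1 : Pc * ι a.val * Qc = Pc * ι b.val * Qc := congrArg Subtype.val h
  have h2 : ι a.val = ι b.val := by
    have h3 := congrArg (fun M => Qc * M * Pc) h1
    have e : ∀ A : Matrix (Fin 2) (Fin 2) ℂ, Qc * (Pc * A * Qc) * Pc = (Qc * Pc) * A * (Qc * Pc) := by
      intro A; noncomm_ring
    rw [e, e, hQP, Matrix.one_mul, Matrix.mul_one, Matrix.one_mul, Matrix.mul_one] at h3
    exact h3
  have h4 : a.val.val = b.val.val :=
    Matrix.map_injective GaussianInt.toComplex_injective h2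
  exact Subtype.ext (Subtype.ext h4)


lemma sqrt2C : (Real.sqrt 2 : ℂ) * (Real.sqrt 2 : ℂ) = 2 := by
  rw [← Complex.ofReal_mul, Real.mul_self_sqrt (by norm_num)]
  norm_num

lemma sqrt2C_ne : (Real.sqrt 2 : ℂ) ≠ 0 := by
  intro h
  have := sqrt2C
  rw [h] at this
  norm_num at this

lemma hexp : Complex.exp (-(Real.pi / 4) * I) = (Real.sqrt 2 : ℂ)/2 * (1 - I) := by
  have h1 : (-(↑Real.pi / 4) * I : ℂ) = ↑(-(Real.pi/4) : ℝ) * I := by push_cast; ring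
  rw [h1, Complex.exp_mul_I, ← Complex.ofReal_cos, ← Complex.ofReal_sin,
    Real.cos_neg, Real.sin_neg, Real.cos_pi_div_four, Real.sin_pi_div_four]
  push_cast
  ring

lemma FsfEq : Fsf = !![(1-I)/2, (-1-I)/2; (1-I)/2, (1+I)/2] := by
  unfold Fsf
  rw [hexp]
  ext i j
  fin_cases i <;> fin_cases j <;>
    simp [Hadamard, Sgate, Matrix.mul_apply, Fin.sum_univ_two, Matrix.vecMul,
      dotProduct, Matrix.vecHead, Matrix.vecTail,
      Matrix.conjTranspose_apply, Matrix.smul_apply] <;>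
    field_simp <;> ring_nf <;>
    simp [sq, sqrt2C] <;> ring

def tX : T := ⟨gX, mem_T_iff.mpr (hw1 ▸ lf_mem 1)⟩
def tZ : T := ⟨gZ, mem_T_iff.mpr (hw2 ▸ lf_mem 2)⟩
def tF : T := ⟨gF, mem_T_iff.mpr (hw3 ▸ lf_mem 3)⟩

lemma hXval : (Θ tX : Matrix (Fin 2) (Fin 2) ℂ) = Xsf := by
  show Pc * (gX.val.map cg) * Qc = Xsf
  ext i j
  fin_cases i <;> fin_cases j <;>
    simp [Pc, Qc, gX, e1, cg, GaussianInt.toComplex_def, Xsf, PauliX,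
      Matrix.mul_apply, Fin.sum_univ_two, Matrix.map_apply, Matrix.smul_apply,
      Matrix.vecMul, dotProduct, Matrix.vecHead, Matrix.vecTail] <;>
    norm_num [Complex.ext_iff]

lemma hZval : (Θ tZ : Matrix (Fin 2) (Fin 2) ℂ) = Zsf := by
  show Pc * (gZ.val.map cg) * Qc = Zsf
  ext i j
  fin_cases i <;> fin_cases j <;>
    simp [Pc, Qc, gZ, e2, cg, GaussianInt.toComplex_def, Zsf, PauliZ,
      Matrix.mul_apply, Fin.sum_univ_two, Matrix.map_apply, Matrix.smul_apply,
      Matrix.vecMul, dotProduct, Matrix.vecHead, Matrix.vecTail] <;>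
    norm_num [Complex.ext_iff]

lemma hFval : (Θ tF : Matrix (Fin 2) (Fin 2) ℂ) = Fsf := by
  rw [FsfEq]
  show Pc * (gF.val.map cg) * Qc = _
  ext i j
  fin_cases i <;> fin_cases j <;>
    simp [Pc, Qc, gF, e3, cg, GaussianInt.toComplex_def,
      Matrix.mul_apply, Fin.sum_univ_two, Matrix.map_apply, Matrix.smul_apply,
      Matrix.vecMul, dotProduct, Matrix.vecHead, Matrix.vecTail] <;>
    norm_num [Complex.ext_iff]

lemma htet : tetGens = ⇑Θ '' {tX, tZ, tF} := by
  ext g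
  simp only [tetGens, Set.mem_setOf_eq, Set.image_insert_eq, Set.image_singleton,
    Set.mem_insert_iff, Set.mem_singleton_iff]
  constructor
  · rintro (h | h | h)
    · exact Or.inl (Subtype.ext (h.trans hXval.symm))
    · exact Or.inr (Or.inl (Subtype.ext (h.trans hZval.symm)))
    · exact Or.inr (Or.inr (Subtype.ext (h.trans hFval.symm)))
  · rintro (rfl | rfl | rfl)
    · exact Or.inl hXval
    · exact Or.inr (Or.inl hZval)
    · exact Or.inr (Or.inr hFval)

lemma himg : ⇑T.subtype '' {tX, tZ, tF} = {gX, gZ, gF} := by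
  simp only [Set.image_insert_eq, Set.image_singleton]
  rfl

lemma htop : Subgroup.closure ({tX, tZ, tF} : Set T) = ⊤ := by
  apply Subgroup.map_injective T.subtype_injective
  rw [MonoidHom.map_closure, himg, hTclos, ← MonoidHom.range_eq_map,
    Subgroup.range_subtype]

lemma hclosT : Subgroup.closure tetGens = Θ.range := by
  rw [htet, ← MonoidHom.map_closure, htop, ← MonoidHom.range_eq_map]

/-- 𝖷 = -iX, 𝖹 = -iZ and 𝖥 = e^{-iπ/4} H S† generate a subgroup of
SU(2) of order 24, isomorphic to SL(2,3) (the binary tetrahedral group). -/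
theorem binaryTetrahedral_card_and_iso :
    (∀ g ∈ Subgroup.closure tetGens,
        (g : Matrix (Fin 2) (Fin 2) ℂ) ∈ Matrix.specialUnitaryGroup (Fin 2) ℂ) ∧
    Nat.card (Subgroup.closure tetGens) = 24 ∧
    Nonempty (↥(Subgroup.closure tetGens) ≃* Matrix.SpecialLinearGroup (Fin 2) (ZMod 3)) := by
  refine ⟨?_, ?_, ?_⟩
  · intro g hg
    rw [hclosT] at hg
    obtain ⟨t, rfl⟩ := hg
    refine Submonoid.mem_inf.mpr ⟨(Θ t).2, ?_⟩
    rw [MonoidHom.mem_mker]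
    show (Pc * ι t.val * Qc).det = 1
    rw [Matrix.det_mul, Matrix.det_mul]
    have h1 : (ι t.val).det = 1 := by
      show ((t.val).val.map cg).det = 1
      rw [show (t.val).val.map ⇑cg = cg.mapMatrix (t.val).val from rfl, ← RingHom.map_det,
        t.val.2, cg.map_one]
    rw [h1, mul_one, ← Matrix.det_mul, hPQ, Matrix.det_one]
  · rw [hclosT]
    exact (Nat.card_congr (MonoidHom.ofInjective Θ_inj).toEquiv).symm.trans cardT
  · exact ⟨((MulEquiv.subgroupCongr hclosT).trans (MonoidHom.ofInjective Θ_inj).symm).trans equivT⟩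

end
end

section
/- Any element of SU(2) lying in a finite level C^(r) of the single-qubit Clifford hierarchy has all matrix entries in the cyclotomic field Q(ζ_{2^{r+1}}). -/
open Matrix Complex

noncomputable section

/-- The generating set {-iX, -iZ} of the special Pauli group,
as a subset of the 2×2 unitary group. -/
def pauliGens : Set (Matrix.unitaryGroup (Fin 2) ℂ) :=
  {g | (g : Matrix (Fin 2) (Fin 2) ℂ) = Xsf ∨ (g : Matrix (Fin 2) (Fin 2) ℂ) = Zsf}

/-- The single-qubit (special) Clifford hierarchy, indexed so that
`cliffordHierarchy r` is the level C^(r+1):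
C^(1) = ⟨-iX, -iZ⟩ and C^(r+1) = {U ∈ SU(2) : U P U† ⊆ C^(r) for all P ∈ C^(1)}. -/
def cliffordHierarchy : ℕ → Set (Matrix.unitaryGroup (Fin 2) ℂ)
  | 0 => ↑(Subgroup.closure pauliGens)
  | (n + 1) =>
      {U | (U : Matrix (Fin 2) (Fin 2) ℂ).det = 1 ∧
        ∀ p ∈ (↑(Subgroup.closure pauliGens) :
            Set (Matrix.unitaryGroup (Fin 2) ℂ)), U * p * U⁻¹ ∈ cliffordHierarchy n}

namespace CHAux

abbrev Mat := Matrix (Fin 2) (Fin 2) ℂ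

/-! ### roots of unity -/

noncomputable def ω (k : ℕ) : ℂ := Complex.exp (2 * Real.pi * Complex.I / (2 ^ (k + 2)))

lemma w_ne (k : ℕ) : ω k ≠ 0 := Complex.exp_ne_zero _

lemma w_pow (k : ℕ) (j : ℕ) (h : j ≤ k + 2) :
    ω k ^ ((2:ℕ)^j) = Complex.exp (2 * Real.pi * Complex.I / (2 ^ (k + 2 - j))) := by
  rw [ω, ← Complex.exp_nat_mul]
  congr 1
  have h2 : (2:ℂ) ^ (k+2) = 2 ^ j * 2 ^ (k+2-j) := by
    rw [← pow_add]; congr 1; omega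
  have hne : (2:ℂ) ^ (k+2-j) ≠ 0 := pow_ne_zero _ two_ne_zero
  have hne' : (2:ℂ) ^ j ≠ 0 := pow_ne_zero _ two_ne_zero
  rw [h2]
  field_simp
  push_cast
  ring

lemma w_quarter (k : ℕ) : ω k ^ ((2:ℕ)^k) = I := by
  rw [w_pow k k (by omega)]
  have h : k + 2 - k = 2 := by omega
  rw [h]
  have : (2 : ℂ) * Real.pi * Complex.I / (2^2) = (Real.pi/2 : ℝ) * Complex.I := by
    push_cast; ring
  rw [this, Complex.exp_mul_I]; simp

lemma w_half (k : ℕ) : ω k ^ ((2:ℕ)^(k+1)) = -1 := by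
  rw [w_pow k (k+1) (by omega)]
  have h : k + 2 - (k+1) = 1 := by omega
  rw [h]
  have : (2 : ℂ) * Real.pi * Complex.I / (2^1) = (Real.pi : ℝ) * Complex.I := by
    push_cast; ring
  rw [this, Complex.exp_mul_I]; simp

lemma w_sq (k : ℕ) : ω (k+1) ^ (2:ℕ) = ω k := by
  rw [ω, ← Complex.exp_nat_mul, ω]
  congr 1
  have hne : (2:ℂ) ^ (k+2) ≠ 0 := pow_ne_zero _ two_ne_zero
  have h2 : (2:ℂ) ^ (k+1+2) = 2 * 2^(k+2) := by rw [pow_succ]; ring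
  rw [h2]
  field_simp
  ring

lemma w0 : ω 0 = I := by simpa using w_quarter 0

lemma wmul (k : ℕ) (m n : ℤ) : ω k ^ m * ω k ^ n = ω k ^ (m + n) :=
  (zpow_add₀ (w_ne k) m n).symm

lemma w_unit (k : ℕ) (n : ℤ) : ω k ^ n * ω k ^ (-n) = 1 := by
  rw [wmul]; simp

lemma w_conj (k : ℕ) (n : ℤ) : (starRingEnd ℂ) (ω k ^ n) = ω k ^ (-n) := by
  have hc : (2 * (Real.pi:ℂ) * Complex.I / 2 ^ (k + 2)) = ((2*Real.pi/2^(k+2) : ℝ) : ℂ) * Complex.I := by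
    push_cast; ring
  have h1 : (starRingEnd ℂ) (ω k) = (ω k)⁻¹ := by
    rw [ω, ← Complex.exp_conj, ← Complex.exp_neg, hc]
    congr 1
    simp [Complex.conj_ofReal, map_ofNat]
  rw [map_zpow₀, h1, _root_.inv_zpow']

lemma w_zh (k : ℕ) : ω k ^ ((2:ℤ)^(k+1)) = -1 := by
  rw [show ((2:ℤ)^(k+1)) = (((2^(k+1) : ℕ)) : ℤ) by push_cast; ring, zpow_natCast]
  exact w_half k

lemma w_zquarter (k : ℕ) : ω k ^ ((2:ℤ)^k) = I := by
  rw [show ((2:ℤ)^k) = (((2^k : ℕ)) : ℤ) by push_cast; ring, zpow_natCast]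
  exact w_quarter k

lemma w_inv (k : ℕ) (n : ℤ) : (ω k ^ n)⁻¹ = ω k ^ (-n) :=
  inv_eq_of_mul_eq_one_right (w_unit k n)

lemma w_zhalf (k : ℕ) (n : ℤ) : ω k ^ (n + 2^(k+1)) = - ω k ^ n := by
  rw [← wmul, w_zh]; ring

lemma w_negI (k : ℕ) : ω k ^ (3 * (2:ℤ)^k) = -I := by
  rw [show (3:ℤ) * 2^k = 2^k + 2^(k+1) by ring, ← wmul, w_zquarter, w_zh]
  ring

lemma w_zsq (k : ℕ) (n : ℤ) : ω (k+1) ^ (2*n) = ω k ^ n := by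
  have h2 : ω (k+1) ^ (2:ℤ) = ω k := by
    rw [zpow_two, ← w_sq k, pow_two]
  rw [_root_.zpow_mul, h2]

lemma w_sq' (k : ℕ) (n : ℤ) : ω (k+1) ^ n * ω (k+1) ^ n = ω k ^ n := by
  rw [wmul, show n + n = 2*n by ring, w_zsq]

/-! ### basic matrices -/

def M3 (p q r : ℂ) : Mat := !![-r*I, -p*I - q; -p*I + q, r*I]

noncomputable def mat (a₁ a₂ a₃ : ℝ) : Mat := M3 (a₁:ℂ) (a₂:ℂ) (a₃:ℂ)

lemma I3 : (I:ℂ)^3 = -I := by rw [pow_succ, Complex.I_sq]; ring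

lemma eq22 {a b c d a' b' c' d' : ℂ} (h1 : a = a') (h2 : b = b') (h3 : c = c') (h4 : d = d') :
    !![a,b;c,d] = (!![a',b';c',d'] : Mat) := by
  subst h1 h2 h3 h4; rfl

lemma Xsf_eq : Xsf = !![0, -I; -I, 0] := by
  ext i j; fin_cases i <;> fin_cases j <;> simp [Xsf, PauliX]

lemma Zsf_eq : Zsf = !![-I, 0; 0, I] := by
  ext i j; fin_cases i <;> fin_cases j <;> simp [Zsf, PauliZ]

lemma Xsf_mat : Xsf = mat 1 0 0 := by
  rw [Xsf_eq, mat, M3]; norm_num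

lemma Zsf_mat : Zsf = mat 0 0 1 := by
  rw [Zsf_eq, mat, M3]; norm_num

lemma XZ_mat : Xsf * Zsf = mat 0 (-1) 0 := by
  rw [Xsf_eq, Zsf_eq, mat, M3, Matrix.mul_fin_two]
  norm_num

lemma ZX_rel : Zsf * Xsf = -(Xsf * Zsf) := by
  rw [Xsf_eq, Zsf_eq, Matrix.mul_fin_two, Matrix.mul_fin_two]
  ext i j; fin_cases i <;> fin_cases j <;> simp <;> ring

lemma mat_neg (a₁ a₂ a₃ : ℝ) : -(mat a₁ a₂ a₃) = mat (-a₁) (-a₂) (-a₃) := by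
  unfold mat M3
  ext i j; fin_cases i <;> fin_cases j <;> simp <;> push_cast <;> ring

lemma mat_sq (a₁ a₂ a₃ : ℝ) (h : a₁^2 + a₂^2 + a₃^2 = 1) :
    mat a₁ a₂ a₃ * mat a₁ a₂ a₃ = -1 := by
  have hc : (a₁:ℂ)^2 + (a₂:ℂ)^2 + (a₃:ℂ)^2 = 1 := by exact_mod_cast h
  unfold mat M3
  ext i j
  fin_cases i <;> fin_cases j <;>
    (simp [Matrix.mul_apply, Fin.sum_univ_two]; try ring_nf;
     try simp only [I3, Complex.I_sq])
  all_goals linear_combination (-1:ℂ)*hc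

lemma Xsf_sq : Xsf * Xsf = -1 := by
  rw [Xsf_mat]; exact mat_sq 1 0 0 (by norm_num)

lemma Zsf_sq : Zsf * Zsf = -1 := by
  rw [Zsf_mat]; exact mat_sq 0 0 1 (by norm_num)

lemma conj_mat (a₁ a₂ a₃ v₁ v₂ v₃ : ℝ) (h : a₁^2 + a₂^2 + a₃^2 = 1) :
    mat a₁ a₂ a₃ * mat v₁ v₂ v₃ * mat a₁ a₂ a₃ =
      -(mat (2*(a₁*v₁+a₂*v₂+a₃*v₃)*a₁ - v₁) (2*(a₁*v₁+a₂*v₂+a₃*v₃)*a₂ - v₂)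
        (2*(a₁*v₁+a₂*v₂+a₃*v₃)*a₃ - v₃)) := by
  have hc : (a₁:ℂ)^2 + (a₂:ℂ)^2 + (a₃:ℂ)^2 = 1 := by exact_mod_cast h
  unfold mat M3
  ext i j
  fin_cases i <;> fin_cases j <;>
    (simp [Matrix.mul_apply, Fin.sum_univ_two]; try push_cast; try ring_nf;
     try simp only [I3, Complex.I_sq])
  · linear_combination (-(v₃:ℂ))*I*hc
  · linear_combination (-(v₁:ℂ)*I - (v₂:ℂ))*hc
  · linear_combination (-(v₁:ℂ)*I + (v₂:ℂ))*hc
  · linear_combination ((v₃:ℂ))*I*hc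

lemma mat_inj {a₁ a₂ a₃ b₁ b₂ b₃ : ℝ} (h : mat a₁ a₂ a₃ = mat b₁ b₂ b₃) :
    a₁ = b₁ ∧ a₂ = b₂ ∧ a₃ = b₃ := by
  unfold mat M3 at h
  have h01 := congrFun (congrFun h 0) 1
  have h11 := congrFun (congrFun h 1) 1
  simp [Complex.ext_iff] at h01 h11
  exact ⟨h01.2, h01.1, h11⟩

lemma mat_det (a₁ a₂ a₃ : ℝ) : (mat a₁ a₂ a₃).det = ((a₁^2+a₂^2+a₃^2 : ℝ) : ℂ) := by
  unfold mat M3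
  rw [Matrix.det_fin_two_of]
  push_cast
  ring_nf
  simp only [I3, Complex.I_sq]
  ring

lemma mat_anticomm_X (a₁ a₂ a₃ : ℝ) :
    mat a₁ a₂ a₃ * Xsf + Xsf * mat a₁ a₂ a₃ = (-2*(a₁:ℂ)) • 1 := by
  unfold mat M3
  rw [Xsf_eq]
  ext i j
  fin_cases i <;> fin_cases j <;>
    simp [Matrix.mul_apply, Fin.sum_univ_two, Matrix.one_apply] <;> ring_nf <;>
    simp [Complex.I_sq] <;> ring

/-! ### the scalar lemma -/

lemma commute_scalar (M : Mat) (hx : M * Xsf = Xsf * M) (hz : M * Zsf = Zsf * M) :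
    M = (M 0 0) • 1 := by
  rw [Xsf_eq] at hx
  rw [Zsf_eq] at hz
  have e1 := congrFun (congrFun hx 0 ) 0
  have e2 := congrFun (congrFun hx 0) 1
  have e3 := congrFun (congrFun hz 0) 1
  simp [Matrix.mul_apply, Fin.sum_univ_two] at e1 e2 e3
  -- e1 : -(M 0 1 * I) = -(I * M 1 0) ; e2 : -(M 0 0 * I) = -(I * M 1 1); e3 : M 0 1 * I = -(I * M 0 1)
  have h01 : M 0 1 = 0 := by
    have : (2*I) * M 0 1 = 0 := by linear_combination e3
    simpa [Complex.I_ne_zero] using mul_eq_zero.mp this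
  have h10 : M 1 0 = 0 := by
    have : I * (M 1 0 - M 0 1) = 0 := by linear_combination -e1
    rcases mul_eq_zero.mp this with h | h
    · exact absurd h Complex.I_ne_zero
    · have := sub_eq_zero.mp h; rw [this, h01]
  have h11 : M 1 1 = M 0 0 := by
    have : I * (M 1 1 - M 0 0) = 0 := by linear_combination -e2
    rcases mul_eq_zero.mp this with h | h
    · exact absurd h Complex.I_ne_zero
    · exact sub_eq_zero.mp h
  ext i j
  fin_cases i <;> fin_cases j <;> simp [Matrix.one_apply, h01, h10, h11]

/-! ### the order-3 Clifford rotation E -/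

def E : Mat := !![(1-I)/2, (-1-I)/2; (1-I)/2, (1+I)/2]
def Ei : Mat := !![(1+I)/2, (1+I)/2; (-1+I)/2, (1-I)/2]

lemma EEi : E * Ei = 1 := by
  unfold E Ei
  ext i j
  fin_cases i <;> fin_cases j <;>
    (simp [Matrix.mul_apply, Fin.sum_univ_two, Matrix.one_apply]; try ring_nf;
     try simp only [I3, Complex.I_sq]) <;> try ring

lemma EiE : Ei * E = 1 := by
  unfold E Ei
  ext i j
  fin_cases i <;> fin_cases j <;>
    (simp [Matrix.mul_apply, Fin.sum_univ_two, Matrix.one_apply]; try ring_nf;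
     try simp only [I3, Complex.I_sq]) <;> try ring

lemma E_det : E.det = 1 := by
  unfold E
  rw [Matrix.det_fin_two_of]
  ring_nf
  simp only [I3, Complex.I_sq]
  ring

lemma Econj (p q r : ℂ) : E * M3 p q r * Ei = M3 r p q := by
  unfold E Ei M3
  ext i j
  fin_cases i <;> fin_cases j <;>
    (simp [Matrix.mul_apply, Fin.sum_univ_two]; try ring_nf;
     try simp only [I3, Complex.I_sq]) <;> try ring

lemma Econj' (p q r : ℂ) : Ei * M3 p q r * E = M3 q r p := by
  have h := Econj q r p
  have : Ei * (E * M3 q r p * Ei) * E = Ei * M3 p q r * E := by rw [h]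
  rw [← this, ← mul_assoc, ← mul_assoc, EiE, one_mul, mul_assoc, EiE, mul_one]

lemma Econj'_mat (b₁ b₂ b₃ : ℝ) : Ei * mat b₁ b₂ b₃ * E = mat b₂ b₃ b₁ :=
  Econj' (b₁:ℂ) (b₂:ℂ) (b₃:ℂ)

lemma EZsfEi : E * Zsf * Ei = Xsf := by
  have h : Zsf = M3 0 0 1 := by rw [Zsf_mat]; norm_num [mat]
  have h2 : Xsf = M3 1 0 0 := by rw [Xsf_mat]; norm_num [mat]
  rw [h, h2, Econj]

lemma EiXsfE : Ei * Xsf * E = Zsf := by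
  have h : Zsf = M3 0 0 1 := by rw [Zsf_mat]; norm_num [mat]
  have h2 : Xsf = M3 1 0 0 := by rw [Xsf_mat]; norm_num [mat]
  rw [h, h2, Econj']

lemma EiZsfE : Ei * Zsf * E = M3 0 1 0 := by
  have h : Zsf = M3 0 0 1 := by rw [Zsf_mat]; norm_num [mat]
  rw [h, Econj']


noncomputable def PP (k : ℕ) (n : ℤ) : Mat := !![0, -I * ω k ^ (-n); -I * ω k ^ n, 0]

lemma dinv (u v : ℂ) (huv : u * v = 1) : !![u,0;0,v] * !![v,0;0,u] = 1 := by
  rw [Matrix.mul_fin_two]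
  ext i j
  fin_cases i <;> fin_cases j <;> simp [Matrix.one_apply] <;>
    (first | ring1 | linear_combination huv)

lemma ddet (u v : ℂ) (huv : u * v = 1) : (!![u,0;0,v] : Mat).det = 1 := by
  rw [Matrix.det_fin_two_of]
  linear_combination huv

lemma dconj (u v p q r : ℂ) (huv : u * v = 1) :
    !![u,0;0,v] * M3 p q r * !![v,0;0,u] =
      !![-r*I, (u*u)*(-p*I - q); (v*v)*(-p*I+q), r*I] := by
  unfold M3
  rw [Matrix.mul_fin_two, Matrix.mul_fin_two]
  ext i j
  fin_cases i <;> fin_cases j <;> simp <;>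
    (first | ring1 | linear_combination (-r*I)*huv | linear_combination (r*I)*huv)

lemma dX (u v : ℂ) (huv : u * v = 1) :
    !![u,0;0,v] * Xsf * !![v,0;0,u] = !![0, -(u*u)*I; -(v*v)*I, 0] := by
  have h2 : Xsf = M3 1 0 0 := by rw [Xsf_mat]; norm_num [mat]
  rw [h2, dconj u v 1 0 0 huv]
  ext i j
  fin_cases i <;> fin_cases j <;> simp <;> ring

lemma dZ (u v : ℂ) (huv : u * v = 1) :
    !![u,0;0,v] * Zsf * !![v,0;0,u] = Zsf := by
  have h2 : Zsf = M3 0 0 1 := by rw [Zsf_mat]; norm_num [mat]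
  rw [h2, dconj u v 0 0 1 huv]
  unfold M3
  ext i j
  fin_cases i <;> fin_cases j <;> simp

lemma Dz_X (k : ℕ) (n : ℤ) :
    !![ω (k+1) ^ (-n),0;0,ω (k+1) ^ n] * Xsf * !![ω (k+1) ^ n,0;0,ω (k+1) ^ (-n)] = PP k n := by
  have huv : ω (k+1) ^ (-n) * ω (k+1) ^ n = 1 := by rw [mul_comm]; exact w_unit (k+1) n
  rw [dX _ _ huv, PP]
  exact eq22 rfl (by linear_combination (-I) * (w_sq' k (-n)))
    (by linear_combination (-I) * (w_sq' k n)) rfl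

/-! ### axis sets -/

def NN (k : ℕ) (a₁ a₂ a₃ : ℝ) : Prop :=
  (a₃ = 0 ∧ ∃ n : ℤ, (a₁:ℂ) + (a₂:ℂ)*I = ω k ^ n) ∨
  (a₂ = 0 ∧ ∃ n : ℤ, (a₃:ℂ) + (a₁:ℂ)*I = ω k ^ n) ∨
  (a₁ = 0 ∧ ∃ n : ℤ, (a₂:ℂ) + (a₃:ℂ)*I = ω k ^ n)

lemma mulI_pow (k : ℕ) (n : ℤ) (x : ℂ) (h : x = ω k ^ n) : x * I = ω k ^ (n + 2^k) := by
  rw [h, ← w_zquarter k, wmul]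

lemma divI_pow (k : ℕ) (n : ℤ) (x : ℂ) (h : x * I = ω k ^ n) : x = ω k ^ (n - 2^k) := by
  have h2 : ω k ^ (n - 2^k) * I = x * I := by
    rw [h, ← w_zquarter k, wmul]
    congr 1
    ring
  exact (mul_left_injective₀ Complex.I_ne_zero h2).symm

lemma canon3 {k : ℕ} {v₁ v₂ v₃ : ℝ} (h : NN k v₁ v₂ v₃) (h3 : v₃ = 0) :
    ∃ n : ℤ, (v₁:ℂ) + (v₂:ℂ)*I = ω k ^ n := by
  rcases h with ⟨_, n, hn⟩ | ⟨h2, n, hn⟩ | ⟨h1, n, hn⟩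
  · exact ⟨n, hn⟩
  · subst h3; subst h2
    simp only [Complex.ofReal_zero, zero_add, zero_mul, add_zero] at hn ⊢
    exact ⟨n - 2^k, divI_pow k n _ hn⟩
  · subst h3; subst h1
    simp only [Complex.ofReal_zero, zero_add, zero_mul, add_zero, mul_zero] at hn ⊢
    refine ⟨n + 2^k, ?_⟩
    rw [← mulI_pow k n _ hn]
    try ring

lemma canon2 {k : ℕ} {v₁ v₂ v₃ : ℝ} (h : NN k v₁ v₂ v₃) (h2 : v₂ = 0) :
    ∃ n : ℤ, (v₃:ℂ) + (v₁:ℂ)*I = ω k ^ n := by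
  rcases h with ⟨h3, n, hn⟩ | ⟨_, n, hn⟩ | ⟨h1, n, hn⟩
  · subst h3; subst h2
    simp only [Complex.ofReal_zero, zero_add, zero_mul, add_zero, mul_zero] at hn ⊢
    refine ⟨n + 2^k, ?_⟩
    rw [← mulI_pow k n _ hn]
    try ring
  · exact ⟨n, hn⟩
  · subst h2; subst h1
    simp only [Complex.ofReal_zero, zero_add, zero_mul, add_zero] at hn ⊢
    exact ⟨n - 2^k, divI_pow k n _ hn⟩

lemma canon1 {k : ℕ} {v₁ v₂ v₃ : ℝ} (h : NN k v₁ v₂ v₃) (h1 : v₁ = 0) :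
    ∃ n : ℤ, (v₂:ℂ) + (v₃:ℂ)*I = ω k ^ n := by
  rcases h with ⟨h3, n, hn⟩ | ⟨h2, n, hn⟩ | ⟨_, n, hn⟩
  · subst h3; subst h1
    simp only [Complex.ofReal_zero, zero_add, zero_mul, add_zero] at hn ⊢
    exact ⟨n - 2^k, divI_pow k n _ hn⟩
  · subst h2; subst h1
    simp only [Complex.ofReal_zero, zero_add, zero_mul, add_zero, mul_zero] at hn ⊢
    refine ⟨n + 2^k, ?_⟩
    rw [← mulI_pow k n _ hn]
    try ring
  · exact ⟨n, hn⟩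

lemma NN_neg {k : ℕ} {v₁ v₂ v₃ : ℝ} (h : NN k v₁ v₂ v₃) : NN k (-v₁) (-v₂) (-v₃) := by
  rcases h with ⟨h3, n, hn⟩ | ⟨h2, n, hn⟩ | ⟨h1, n, hn⟩
  · refine Or.inl ⟨by rw [h3]; ring, n + 2^(k+1), ?_⟩
    rw [w_zhalf, ← hn]; push_cast; ring
  · refine Or.inr (Or.inl ⟨by rw [h2]; ring, n + 2^(k+1), ?_⟩)
    rw [w_zhalf, ← hn]; push_cast; ring
  · refine Or.inr (Or.inr ⟨by rw [h1]; ring, n + 2^(k+1), ?_⟩)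
    rw [w_zhalf, ← hn]; push_cast; ring

lemma NN_cyc {k : ℕ} {v₁ v₂ v₃ : ℝ} (h : NN k v₁ v₂ v₃) : NN k v₂ v₃ v₁ := by
  rcases h with ⟨h3, n, hn⟩ | ⟨h2, n, hn⟩ | ⟨h1, n, hn⟩
  · exact Or.inr (Or.inl ⟨h3, n, hn⟩)
  · exact Or.inr (Or.inr ⟨h2, n, hn⟩)
  · exact Or.inl ⟨h1, n, hn⟩

lemma sqrt_step (k : ℕ) (n : ℤ) (z : ℂ) (h : z * z = ω k ^ n) :
    ∃ m : ℤ, z = ω (k+1) ^ m := by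
  have hfac : (z - ω (k+1) ^ n) * (z + ω (k+1) ^ n) = 0 := by
    linear_combination h - w_sq' k n
  rcases mul_eq_zero.mp hfac with hf | hf
  · exact ⟨n, sub_eq_zero.mp hf⟩
  · refine ⟨n + 2^(k+2), ?_⟩
    rw [w_zhalf (k+1) n]
    linear_combination hf

lemma GEO (k : ℕ) (a₁ a₂ a₃ : ℝ) (h : a₁^2+a₂^2+a₃^2 = 1)
    (hb : NN k (2*a₃*a₁) (2*a₃*a₂) (2*a₃*a₃-1))
    (hc : NN k (2*a₁*a₁-1) (2*a₁*a₂) (2*a₁*a₃))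
    (hd : NN k (2*a₂*a₁) (2*a₂*a₂-1) (2*a₂*a₃)) : NN (k+1) a₁ a₂ a₃ := by
  by_cases h3 : a₃ = 0
  · obtain ⟨n, hn⟩ := canon3 hc (by rw [h3]; ring)
    have hr : a₁^2 + a₂^2 = 1 := by rw [h3] at h; linarith [h]
    have hcc : (a₁:ℂ)^2 + (a₂:ℂ)^2 = 1 := by exact_mod_cast hr
    have hzz : ((a₁:ℂ) + (a₂:ℂ)*I) * ((a₁:ℂ) + (a₂:ℂ)*I) = ω k ^ n := by
      rw [← hn]
      push_cast
      linear_combination ((a₂:ℂ)^2) * Complex.I_sq - hcc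
    obtain ⟨m, hm⟩ := sqrt_step k n _ hzz
    exact Or.inl ⟨h3, m, hm⟩
  · by_cases h2 : a₂ = 0
    · obtain ⟨n, hn⟩ := canon2 hb (by rw [h2]; ring)
      have hr : a₃^2 + a₁^2 = 1 := by rw [h2] at h; linarith [h]
      have hcc : (a₃:ℂ)^2 + (a₁:ℂ)^2 = 1 := by exact_mod_cast hr
      have hzz : ((a₃:ℂ) + (a₁:ℂ)*I) * ((a₃:ℂ) + (a₁:ℂ)*I) = ω k ^ n := by
        rw [← hn]
        push_cast
        linear_combination ((a₁:ℂ)^2) * Complex.I_sq - hcc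
      obtain ⟨m, hm⟩ := sqrt_step k n _ hzz
      exact Or.inr (Or.inl ⟨h2, m, hm⟩)
    · by_cases h1 : a₁ = 0
      · obtain ⟨n, hn⟩ := canon1 hd (by rw [h1]; ring)
        have hr : a₂^2 + a₃^2 = 1 := by rw [h1] at h; linarith [h]
        have hcc : (a₂:ℂ)^2 + (a₃:ℂ)^2 = 1 := by exact_mod_cast hr
        have hzz : ((a₂:ℂ) + (a₃:ℂ)*I) * ((a₂:ℂ) + (a₃:ℂ)*I) = ω k ^ n := by
          rw [← hn]
          push_cast
          linear_combination ((a₃:ℂ)^2) * Complex.I_sq - hcc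
        obtain ⟨m, hm⟩ := sqrt_step k n _ hzz
        exact Or.inr (Or.inr ⟨h1, m, hm⟩)
      · exfalso
        have e3 : 2*a₃*a₃ - 1 = 0 := by
          rcases hb with ⟨hx, _⟩ | ⟨hx, _⟩ | ⟨hx, _⟩
          · exact hx
          · exact absurd hx (by simp [mul_eq_zero, h3, h2])
          · exact absurd hx (by simp [mul_eq_zero, h3, h1])
        have e1 : 2*a₁*a₁ - 1 = 0 := by
          rcases hc with ⟨hx, _⟩ | ⟨hx, _⟩ | ⟨hx, _⟩
          · exact absurd hx (by simp [mul_eq_zero, h1, h3])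
          · exact absurd hx (by simp [mul_eq_zero, h1, h2])
          · exact hx
        have e2 : 2*a₂*a₂ - 1 = 0 := by
          rcases hd with ⟨hx, _⟩ | ⟨hx, _⟩ | ⟨hx, _⟩
          · exact absurd hx (by simp [mul_eq_zero, h2, h3])
          · exact hx
          · exact absurd hx (by simp [mul_eq_zero, h2, h1])
        nlinarith [e1, e2, e3, h]

/-! ### the Pauli group -/

lemma Xsq' (m : Mat) : Xsf * (Xsf * m) = -m := by
  rw [← mul_assoc, Xsf_sq, neg_one_mul]

lemma Zsq' (m : Mat) : Zsf * (Zsf * m) = -m := by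
  rw [← mul_assoc, Zsf_sq, neg_one_mul]

lemma ZX' (m : Mat) : Zsf * (Xsf * m) = -(Xsf * (Zsf * m)) := by
  rw [← mul_assoc, ZX_rel, neg_mul, mul_assoc]

lemma star_Xsf : star Xsf = -Xsf := by
  rw [Xsf_eq]
  ext i j
  fin_cases i <;> fin_cases j <;>
    simp [Matrix.star_apply, Matrix.conjTranspose_apply]

lemma star_Zsf : star Zsf = -Zsf := by
  rw [Zsf_eq]
  ext i j
  fin_cases i <;> fin_cases j <;>
    simp [Matrix.star_apply, Matrix.conjTranspose_apply]

def PauliSet (M : Mat) : Prop :=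
  M = 1 ∨ M = -1 ∨ M = Xsf ∨ M = -Xsf ∨ M = Zsf ∨ M = -Zsf ∨ M = Xsf*Zsf ∨ M = -(Xsf*Zsf)

lemma pauli_norm (g : Matrix.unitaryGroup (Fin 2) ℂ) (hg : g ∈ Subgroup.closure pauliGens) :
    PauliSet (g : Mat) := by
  induction hg using Subgroup.closure_induction with
  | mem a ha =>
      rcases ha with h | h <;> rw [show ((a : Mat)) = _ from h]
      · exact Or.inr (Or.inr (Or.inl rfl))
      · exact Or.inr (Or.inr (Or.inr (Or.inr (Or.inl rfl))))
  | one => exact Or.inl rfl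
  | mul a b ha hb pa pb =>
      show PauliSet ((a : Mat) * (b : Mat))
      rcases pa with h|h|h|h|h|h|h|h <;> rcases pb with h'|h'|h'|h'|h'|h'|h'|h' <;>
        rw [h, h'] <;>
        simp only [PauliSet, mul_one, one_mul, mul_neg, neg_mul, neg_neg, mul_assoc,
          Xsq', Zsq', ZX', Xsf_sq, Zsf_sq, ZX_rel, mul_neg_one, neg_one_mul] <;>
        tauto
  | inv a ha pa =>
      show PauliSet (star (a : Mat))
      rcases pa with h|h|h|h|h|h|h|h <;> rw [h] <;>
        simp only [PauliSet, star_one, star_neg, Matrix.star_mul, star_Xsf, star_Zsf, mul_one, one_mul,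
          mul_neg, neg_mul, neg_neg, mul_assoc, Xsq', Zsq', ZX', Xsf_sq, Zsf_sq, ZX_rel,
          mul_neg_one, neg_one_mul] <;>
        tauto

lemma one_ne_negone : (1 : Mat) ≠ -1 := by
  intro h
  have := congrFun (congrFun h 0) 0
  simp [Matrix.one_apply] at this
  norm_num at this

/-! ### extracting the axis of an anti-involution -/

lemma U1 (M : Mat) (hst : star M * M = 1) (hst2 : M * star M = 1)
    (hdet : M.det = 1) (hsq : M * M = -1) :
    ∃ a₁ a₂ a₃ : ℝ, a₁^2+a₂^2+a₃^2 = 1 ∧ M = mat a₁ a₂ a₃ := by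
  have hneg : star M = -M := by
    have hm : (-M) * M = 1 := by rw [neg_mul, hsq, neg_neg]
    calc star M = ((-M) * M) * star M := by rw [hm, one_mul]
    _ = (-M) * (M * star M) := by rw [mul_assoc]
    _ = -M := by rw [hst2, mul_one]
  have h00 : (starRingEnd ℂ) (M 0 0) = -(M 0 0) := by
    have := congrFun (congrFun hneg 0) 0
    simpa [Matrix.star_apply, Matrix.conjTranspose_apply] using this
  have h01 : (starRingEnd ℂ) (M 0 1) = -(M 1 0) := by
    have := congrFun (congrFun hneg 1) 0
    simpa [Matrix.star_apply, Matrix.conjTranspose_apply] using this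
  -- trace zero
  have e01 : M 0 0 * M 0 1 + M 0 1 * M 1 1 = 0 := by
    have := congrFun (congrFun hsq 0) 1
    simpa [Matrix.mul_apply, Fin.sum_univ_two, Matrix.one_apply] using this
  have e10 : M 1 0 * M 0 0 + M 1 1 * M 1 0 = 0 := by
    have := congrFun (congrFun hsq 1) 0
    simpa [Matrix.mul_apply, Fin.sum_univ_two, Matrix.one_apply] using this
  have e00 : M 0 0 * M 0 0 + M 0 1 * M 1 0 = -1 := by
    have := congrFun (congrFun hsq 0) 0
    simpa [Matrix.mul_apply, Fin.sum_univ_two, Matrix.one_apply] using this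
  have edet : M 0 0 * M 1 1 - M 0 1 * M 1 0 = 1 := by
    rw [Matrix.det_fin_two] at hdet
    linear_combination hdet
  have htr : M 1 1 = -(M 0 0) := by
    by_cases h1 : M 0 1 = 0
    · by_cases h2 : M 1 0 = 0
      · have hm : M 0 0 * M 0 0 = -1 := by rw [h1] at e00; linear_combination e00
        have hM00 : M 0 0 ≠ 0 := by
          intro hz; rw [hz] at hm; norm_num at hm
        have : M 0 0 * (M 1 1 + M 0 0) = 0 := by
          rw [h1] at edet
          linear_combination edet + hm
        rcases mul_eq_zero.mp this with h | h
        · exact absurd h hM00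
        · linear_combination h
      · have : (M 0 0 + M 1 1) * M 1 0 = 0 := by linear_combination e10
        rcases mul_eq_zero.mp this with h | h
        · linear_combination h
        · exact absurd h h2
    · have : M 0 1 * (M 0 0 + M 1 1) = 0 := by linear_combination e01
      rcases mul_eq_zero.mp this with h | h
      · exact absurd h h1
      · linear_combination h
  set a₃ : ℝ := -(M 0 0).im with ha3
  set a₁ : ℝ := -(M 0 1).im with ha1
  set a₂ : ℝ := -(M 0 1).re with ha2
  have hre00 : (M 0 0).re = 0 := by
    have := congrArg Complex.re h00
    simp [Complex.conj_re] at this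
    linarith
  have hM00 : M 0 0 = -(a₃:ℂ)*I := by
    apply Complex.ext <;> simp [ha3, hre00]
  have hM01 : M 0 1 = -(a₁:ℂ)*I - (a₂:ℂ) := by
    apply Complex.ext <;> simp [ha1, ha2]
  have hM10 : M 1 0 = -(a₁:ℂ)*I + (a₂:ℂ) := by
    have : M 1 0 = -((starRingEnd ℂ) (M 0 1)) := by rw [h01]; ring
    rw [this, hM01]
    apply Complex.ext <;> simp
  have hM11 : M 1 1 = (a₃:ℂ)*I := by rw [htr, hM00]; ring
  have hMeq : M = mat a₁ a₂ a₃ := by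
    unfold mat M3
    ext i j
    fin_cases i <;> fin_cases j <;>
      simp only [Matrix.cons_val', Matrix.cons_val_zero, Matrix.cons_val_one, Matrix.head_cons,
        Matrix.head_fin_const, Matrix.empty_val', Matrix.cons_val_fin_one, Matrix.of_apply]
    · exact hM00
    · exact hM01
    · exact hM10
    · exact hM11
  refine ⟨a₁, a₂, a₃, ?_, hMeq⟩
  have : (mat a₁ a₂ a₃).det = 1 := by rw [← hMeq]; exact hdet
  rw [mat_det] at this
  exact_mod_cast this

/-! ### group plumbing -/

abbrev UG := Matrix.unitaryGroup (Fin 2) ℂ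

lemma coe_mul_star (U : UG) : (U : Mat) * star (U : Mat) = 1 := by
  have := U.2
  rwa [Matrix.mem_unitaryGroup_iff] at this

lemma coe_star_mul (U : UG) : star (U : Mat) * (U : Mat) = 1 :=
  Matrix.UnitaryGroup.star_mul_self U

lemma coe_inv (U : UG) : ((U⁻¹ : UG) : Mat) = star (U : Mat) := rfl

lemma coe_mul (U V : UG) : ((U * V : UG) : Mat) = (U : Mat) * (V : Mat) := rfl

lemma star_eq_neg (M : Mat) (hst2 : M * star M = 1) (hsq : M * M = -1) : star M = -M := by
  have hm : (-M) * M = 1 := by rw [neg_mul, hsq, neg_neg]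
  calc star M = ((-M) * M) * star M := by rw [hm, one_mul]
  _ = (-M) * (M * star M) := by rw [mul_assoc]
  _ = -M := by rw [hst2, mul_one]

def xu : UG := ⟨Xsf, by
  rw [Matrix.mem_unitaryGroup_iff, star_Xsf, mul_neg, Xsf_sq, neg_neg]⟩

def zu : UG := ⟨Zsf, by
  rw [Matrix.mem_unitaryGroup_iff, star_Zsf, mul_neg, Zsf_sq, neg_neg]⟩

lemma xu_mem : xu ∈ Subgroup.closure pauliGens := Subgroup.subset_closure (Or.inl rfl)
lemma zu_mem : zu ∈ Subgroup.closure pauliGens := Subgroup.subset_closure (Or.inr rfl)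
lemma xzu_mem : xu * zu ∈ Subgroup.closure pauliGens := mul_mem xu_mem zu_mem

lemma mXsf : -Xsf = mat (-1) 0 0 := by
  rw [Xsf_mat, mat_neg]; norm_num
lemma mZsf : -Zsf = mat 0 0 (-1) := by
  rw [Zsf_mat, mat_neg]; norm_num
lemma mXZ : -(Xsf*Zsf) = mat 0 1 0 := by
  rw [XZ_mat, mat_neg]; norm_num

lemma NN_neg' {k : ℕ} {v₁ v₂ v₃ : ℝ} (h : NN k (-v₁) (-v₂) (-v₃)) : NN k v₁ v₂ v₃ := by
  have := NN_neg h
  simpa [neg_neg] using this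

/-! ### classification of anti-involutions in the hierarchy -/

theorem Tclass : ∀ (k : ℕ) (A : UG), A ∈ cliffordHierarchy k →
    (A : Mat) * (A : Mat) = -1 →
    ∃ a₁ a₂ a₃ : ℝ, NN k a₁ a₂ a₃ ∧ (A : Mat) = mat a₁ a₂ a₃ := by
  intro k
  induction k with
  | zero =>
    intro A hA hsq
    have hp := pauli_norm A hA
    have hw0 : ω 0 ^ (0:ℤ) = 1 := by norm_num
    have hwm : ω 0 ^ ((0:ℤ) + 2^(0+1)) = -1 := by rw [w_zhalf, hw0]
    rcases hp with h|h|h|h|h|h|h|h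
    · exfalso; rw [h, mul_one] at hsq; exact one_ne_negone hsq
    · exfalso; rw [h, neg_mul_neg, mul_one] at hsq; exact one_ne_negone hsq
    · exact ⟨1, 0, 0, Or.inl ⟨rfl, 0, by rw [hw0]; norm_num⟩, by rw [h, Xsf_mat]⟩
    · exact ⟨-1, 0, 0, Or.inl ⟨rfl, (0:ℤ) + 2^(0+1), by rw [hwm]; norm_num⟩, by rw [h, mXsf]⟩
    · exact ⟨0, 0, 1, Or.inr (Or.inl ⟨rfl, 0, by rw [hw0]; norm_num⟩), by rw [h, Zsf_mat]⟩
    · exact ⟨0, 0, -1, Or.inr (Or.inl ⟨rfl, (0:ℤ) + 2^(0+1), by rw [hwm]; norm_num⟩),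
        by rw [h, mZsf]⟩
    · exact ⟨0, -1, 0, Or.inr (Or.inr ⟨rfl, (0:ℤ) + 2^(0+1), by rw [hwm]; norm_num⟩),
        by rw [h, XZ_mat]⟩
    · exact ⟨0, 1, 0, Or.inr (Or.inr ⟨rfl, 0, by rw [hw0]; norm_num⟩), by rw [h, mXZ]⟩
  | succ k ih =>
    intro A hA hsq
    obtain ⟨hdet, hconj⟩ := hA
    have hstar : star (A : Mat) = -(A : Mat) := star_eq_neg _ (coe_mul_star A) hsq
    obtain ⟨a₁, a₂, a₃, hunit, hmat⟩ :=
      U1 (A : Mat) (coe_star_mul A) (coe_mul_star A) hdet hsq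
    -- generic conjugation computation
    have key : ∀ (p : UG) (v₁ v₂ v₃ : ℝ), (p : Mat) = mat v₁ v₂ v₃ →
        ((A * p * A⁻¹ : UG) : Mat) =
          mat (2*(a₁*v₁+a₂*v₂+a₃*v₃)*a₁ - v₁) (2*(a₁*v₁+a₂*v₂+a₃*v₃)*a₂ - v₂)
              (2*(a₁*v₁+a₂*v₂+a₃*v₃)*a₃ - v₃) := by
      intro p v₁ v₂ v₃ hp
      rw [coe_mul, coe_mul, coe_inv, hstar, hmat, hp, mul_neg, conj_mat _ _ _ _ _ _ hunit,
        neg_neg]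
    have sqnorm : ∀ (v₁ v₂ v₃ : ℝ), v₁^2+v₂^2+v₃^2 = 1 →
        (2*(a₁*v₁+a₂*v₂+a₃*v₃)*a₁ - v₁)^2 + (2*(a₁*v₁+a₂*v₂+a₃*v₃)*a₂ - v₂)^2 +
          (2*(a₁*v₁+a₂*v₂+a₃*v₃)*a₃ - v₃)^2 = 1 := by
      intro v₁ v₂ v₃ hv
      nlinarith [hunit, hv, sq_nonneg (a₁*v₁+a₂*v₂+a₃*v₃)]
    have getNN : ∀ (p : UG) (v₁ v₂ v₃ : ℝ), p ∈ Subgroup.closure pauliGens →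
        (p : Mat) = mat v₁ v₂ v₃ → v₁^2+v₂^2+v₃^2 = 1 →
        NN k (2*(a₁*v₁+a₂*v₂+a₃*v₃)*a₁ - v₁) (2*(a₁*v₁+a₂*v₂+a₃*v₃)*a₂ - v₂)
             (2*(a₁*v₁+a₂*v₂+a₃*v₃)*a₃ - v₃) := by
      intro p v₁ v₂ v₃ hpmem hp hv
      have hq := hconj p hpmem
      have hqm := key p v₁ v₂ v₃ hp
      have hq2 : ((A * p * A⁻¹ : UG) : Mat) * ((A * p * A⁻¹ : UG) : Mat) = -1 := by
        rw [hqm]; exact mat_sq _ _ _ (sqnorm v₁ v₂ v₃ hv)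
      obtain ⟨b₁, b₂, b₃, hbNN, hbmat⟩ := ih _ hq hq2
      obtain ⟨e1, e2, e3⟩ := mat_inj (hbmat.symm.trans hqm)
      rwa [e1, e2, e3] at hbNN
    have hb := getNN zu 0 0 1 zu_mem Zsf_mat (by norm_num)
    have hcc := getNN xu 1 0 0 xu_mem Xsf_mat (by norm_num)
    have hdd := getNN (xu*zu) 0 (-1) 0 xzu_mem XZ_mat (by norm_num)
    refine ⟨a₁, a₂, a₃, ?_, hmat⟩
    apply GEO k a₁ a₂ a₃ hunit
    · rw [show 2*a₃*a₁ = 2*(a₁*0+a₂*0+a₃*1)*a₁ - 0 by ring,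
        show 2*a₃*a₂ = 2*(a₁*0+a₂*0+a₃*1)*a₂ - 0 by ring,
        show 2*a₃*a₃-1 = 2*(a₁*0+a₂*0+a₃*1)*a₃ - 1 by ring]
      exact hb
    · rw [show 2*a₁*a₁-1 = 2*(a₁*1+a₂*0+a₃*0)*a₁ - 1 by ring,
        show 2*a₁*a₂ = 2*(a₁*1+a₂*0+a₃*0)*a₂ - 0 by ring,
        show 2*a₁*a₃ = 2*(a₁*1+a₂*0+a₃*0)*a₃ - 0 by ring]
      exact hcc
    · apply NN_neg'
      rw [show -(2*a₂*a₁) = 2*(a₁*0+a₂*(-1)+a₃*0)*a₁ - 0 by ring,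
        show -(2*a₂*a₂-1) = 2*(a₁*0+a₂*(-1)+a₃*0)*a₂ - (-1) by ring,
        show -(2*a₂*a₃) = 2*(a₁*0+a₂*(-1)+a₃*0)*a₃ - 0 by ring]
      exact hdd

/-! ### conjugate pairs and the core angle lemma -/

lemma conj_pair (k : ℕ) (p : ℤ) (x y : ℝ) (h : (x:ℂ) + (y:ℂ)*I = ω k ^ p) :
    (x:ℂ) - (y:ℂ)*I = ω k ^ (-p) := by
  calc (x:ℂ) - (y:ℂ)*I = (starRingEnd ℂ) ((x:ℂ) + (y:ℂ)*I) := by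
        rw [map_add, _root_.map_mul, Complex.conj_ofReal, Complex.conj_ofReal, Complex.conj_I]
        ring
  _ = ω k ^ (-p) := by rw [h, w_conj]

lemma core (k : ℕ) (c₁ c₂ c₃ : ℝ) (n : ℤ) (hNN : NN k c₁ c₂ c₃)
    (hanti : ω k ^ n * (-(c₁:ℂ)*I - (c₂:ℂ)) + ω k ^ (-n) * (-(c₁:ℂ)*I + (c₂:ℂ)) = 0) :
    ∃ m : ℤ, ω k ^ (-n) * (-(c₁:ℂ)*I + (c₂:ℂ)) + (c₃:ℂ)*I = ω k ^ m := by
  rcases hNN with ⟨h3, p, hp⟩ | ⟨h2, p, hp⟩ | ⟨h1, p, hp⟩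
  · -- c₃ = 0
    subst h3
    refine ⟨p + -n + 3*2^k, ?_⟩
    rw [← wmul, ← wmul, w_negI, ← hp]
    push_cast
    linear_combination (ω k ^ (-n) * (c₂:ℂ)) * Complex.I_sq
  · -- c₂ = 0
    subst h2
    have hfac : (-(c₁:ℂ)*I) * (ω k ^ n + ω k ^ (-n)) = 0 := by
      push_cast at hanti ⊢
      linear_combination hanti
    rcases mul_eq_zero.mp hfac with hz | hsum
    · have hc1 : (c₁:ℂ) = 0 := by
        rcases mul_eq_zero.mp hz with hz' | hI0
        · linear_combination -hz'
        · exact absurd hI0 Complex.I_ne_zero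
      refine ⟨p + 2^k, ?_⟩
      rw [← wmul, w_zquarter, ← hp, hc1]
      push_cast
      ring
    · have hdich : (ω k ^ n - I) * (ω k ^ n + I) = 0 := by
        linear_combination (ω k ^ n) * hsum - w_unit k n - Complex.I_sq
      rcases mul_eq_zero.mp hdich with hd | hd
      · -- ω^n = I, ω^(-n) = -I
        have hI : ω k ^ n = I := by linear_combination hd
        have hu := w_unit k n
        rw [hI] at hu
        have h2 : ω k ^ (-n) = -I := by linear_combination (-I) * hu + (ω k ^ (-n)) * Complex.I_sq
        refine ⟨p + 2^k, ?_⟩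
        rw [← wmul, w_zquarter, ← hp]
        push_cast
        linear_combination (-(c₁:ℂ)*I) * h2
      · -- ω^n = -I, ω^(-n) = I
        have hI : ω k ^ n = -I := by linear_combination hd
        have hu := w_unit k n
        rw [hI] at hu
        have h2 : ω k ^ (-n) = I := by linear_combination I * hu + (ω k ^ (-n)) * Complex.I_sq
        have hcp := conj_pair k p c₃ c₁ hp
        refine ⟨-p + 2^k, ?_⟩
        rw [← wmul, w_zquarter, ← hcp]
        push_cast
        linear_combination (-(c₁:ℂ)*I) * h2
  · -- c₁ = 0
    subst h1
    have hfac : (c₂:ℂ) * (ω k ^ (-n) - ω k ^ n) = 0 := by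
      push_cast at hanti ⊢
      linear_combination hanti
    rcases mul_eq_zero.mp hfac with hz | hsub
    · refine ⟨p, ?_⟩
      rw [← hp]
      push_cast
      linear_combination (ω k ^ (-n) - 1) * hz
    · have hdich : (ω k ^ n - 1) * (ω k ^ n + 1) = 0 := by
        linear_combination (-(ω k ^ n)) * hsub + w_unit k n
      rcases mul_eq_zero.mp hdich with hd | hd
      · have hI : ω k ^ n = 1 := by linear_combination hd
        have hu := w_unit k n
        rw [hI] at hu
        have h2 : ω k ^ (-n) = 1 := by linear_combination hu
        refine ⟨p, ?_⟩
        rw [← hp]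
        push_cast
        linear_combination (c₂:ℂ) * h2
      · have hI : ω k ^ n = -1 := by linear_combination hd
        have hu := w_unit k n
        rw [hI] at hu
        have h2 : ω k ^ (-n) = -1 := by linear_combination -hu
        have hcp := conj_pair k p c₂ c₃ hp
        refine ⟨-p + 2^(k+1), ?_⟩
        rw [w_zhalf, ← hcp]
        push_cast
        linear_combination (c₂:ℂ) * h2

/-! ### field membership -/

noncomputable def FF (k : ℕ) : IntermediateField ℚ ℂ := IntermediateField.adjoin ℚ {ω k}

lemma wFF (k : ℕ) : ω k ∈ FF k := IntermediateField.mem_adjoin_simple_self ℚ _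

lemma wpowFF (k : ℕ) (n : ℤ) : ω k ^ n ∈ FF k := zpow_mem (wFF k) n

lemma IFF (k : ℕ) : I ∈ FF k := by
  rw [← w_zquarter k]
  exact wpowFF k _

def entriesIn (M : Mat) (F : IntermediateField ℚ ℂ) : Prop := ∀ i j, M i j ∈ F

lemma entriesIn_mul {M N : Mat} {F : IntermediateField ℚ ℂ}
    (hM : entriesIn M F) (hN : entriesIn N F) : entriesIn (M*N) F := by
  intro i j
  rw [Matrix.mul_apply]
  exact sum_mem (fun c _ => mul_mem (hM i c) (hN c j))

lemma entriesIn_of {a b c d : ℂ} {F : IntermediateField ℚ ℂ}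
    (h1 : a ∈ F) (h2 : b ∈ F) (h3 : c ∈ F) (h4 : d ∈ F) :
    entriesIn (!![a,b;c,d] : Mat) F := by
  intro i j
  fin_cases i <;> fin_cases j <;> simpa

lemma two_FF (k : ℕ) : (2:ℂ) ∈ FF k := by
  exact_mod_cast natCast_mem (FF k) 2

lemma E_FF (k : ℕ) : entriesIn E (FF k) := by
  unfold E
  have hI := IFF k
  exact entriesIn_of
    (by exact div_mem (sub_mem (one_mem _) hI) (two_FF k))
    (by exact div_mem (sub_mem (neg_mem (one_mem _)) hI) (two_FF k))
    (by exact div_mem (sub_mem (one_mem _) hI) (two_FF k))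
    (by exact div_mem (add_mem (one_mem _) hI) (two_FF k))

lemma Ei_FF (k : ℕ) : entriesIn Ei (FF k) := by
  unfold Ei
  have hI := IFF k
  exact entriesIn_of
    (by exact div_mem (add_mem (one_mem _) hI) (two_FF k))
    (by exact div_mem (add_mem (one_mem _) hI) (two_FF k))
    (by exact div_mem (add_mem (neg_mem (one_mem _)) hI) (two_FF k))
    (by exact div_mem (sub_mem (one_mem _) hI) (two_FF k))

lemma D_FF (k : ℕ) (n : ℤ) : entriesIn (!![ω k ^ (-n), 0; 0, ω k ^ n] : Mat) (FF k) :=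
  entriesIn_of (wpowFF k _) (zero_mem _) (zero_mem _) (wpowFF k _)

/-! ### pattern normal forms -/

lemma form1 {k : ℕ} {a₁ a₂ : ℝ} {n : ℤ} (hn : (a₁:ℂ) + (a₂:ℂ)*I = ω k ^ n) :
    mat a₁ a₂ 0 = PP k n := by
  have hcj := conj_pair k n a₁ a₂ hn
  unfold mat M3 PP
  refine eq22 (by push_cast; ring) ?_ ?_ (by push_cast; ring)
  · rw [← hcj]; push_cast; linear_combination (-(a₂:ℂ))*Complex.I_sq
  · rw [← hn]; push_cast; linear_combination ((a₂:ℂ))*Complex.I_sq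

lemma patA {k : ℕ} {a₁ a₂ a₃ : ℝ} (h : NN k a₁ a₂ a₃) :
    ∃ n : ℤ, mat a₁ a₂ a₃ = PP k n ∨ mat a₁ a₂ a₃ = E * PP k n * Ei ∨
      mat a₁ a₂ a₃ = E * (E * PP k n * Ei) * Ei := by
  rcases h with ⟨h3, n, hn⟩ | ⟨h2, n, hn⟩ | ⟨h1, n, hn⟩
  · subst h3
    exact ⟨n, Or.inl (form1 hn)⟩
  · subst h2
    refine ⟨n, Or.inr (Or.inr ?_)⟩
    rw [← form1 hn]
    show M3 (a₁:ℂ) ((0:ℝ):ℂ) (a₃:ℂ) = _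
    rw [show mat a₃ a₁ 0 = M3 (a₃:ℂ) (a₁:ℂ) ((0:ℝ):ℂ) from rfl, Econj, Econj]
  · subst h1
    refine ⟨n, Or.inr (Or.inl ?_)⟩
    rw [← form1 hn]
    show M3 ((0:ℝ):ℂ) (a₂:ℂ) (a₃:ℂ) = _
    rw [show mat a₂ a₃ 0 = M3 (a₂:ℂ) (a₃:ℂ) ((0:ℝ):ℂ) from rfl, Econj]

/-! ### reconstructing U from its conjugation action -/

lemma finishW (F : IntermediateField ℚ ℂ) (Um Am Bm V Vi : Mat)
    (h1 : V * Vi = 1) (h2 : Vi * V = 1)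
    (hVX : V * (Xsf * Vi) = Am) (hVZ : V * (Zsf * Vi) = Bm)
    (hVdet : V.det = 1) (hVF : entriesIn V F)
    (hdetU : Um.det = 1) (hUX : Um * Xsf = Am * Um) (hUZ : Um * Zsf = Bm * Um) :
    entriesIn Um F := by
  have cVVi : ∀ m : Mat, V * (Vi * m) = m := fun m => by rw [← mul_assoc, h1, one_mul]
  have cViV : ∀ m : Mat, Vi * (V * m) = m := fun m => by rw [← mul_assoc, h2, one_mul]
  have hViA : Vi * Am = Xsf * Vi := by
    rw [← hVX, ← mul_assoc, h2, one_mul]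
  have hViB : Vi * Bm = Zsf * Vi := by
    rw [← hVZ, ← mul_assoc, h2, one_mul]
  have hWX : (Vi * Um) * Xsf = Xsf * (Vi * Um) := by
    calc (Vi * Um) * Xsf = Vi * (Um * Xsf) := by rw [mul_assoc]
    _ = Vi * (Am * Um) := by rw [hUX]
    _ = (Vi * Am) * Um := by rw [mul_assoc]
    _ = (Xsf * Vi) * Um := by rw [hViA]
    _ = Xsf * (Vi * Um) := by rw [mul_assoc]
  have hWZ : (Vi * Um) * Zsf = Zsf * (Vi * Um) := by
    calc (Vi * Um) * Zsf = Vi * (Um * Zsf) := by rw [mul_assoc]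
    _ = Vi * (Bm * Um) := by rw [hUZ]
    _ = (Vi * Bm) * Um := by rw [mul_assoc]
    _ = (Zsf * Vi) * Um := by rw [hViB]
    _ = Zsf * (Vi * Um) := by rw [mul_assoc]
  have hW := commute_scalar (Vi * Um) hWX hWZ
  set w : ℂ := (Vi * Um) 0 0 with hw
  have hUm : Um = w • V := by
    calc Um = V * (Vi * Um) := by rw [cVVi]
    _ = V * (w • (1:Mat)) := by rw [← hW]
    _ = w • (V * 1) := by rw [Matrix.mul_smul]
    _ = w • V := by rw [mul_one]
  have hVidet : Vi.det = 1 := by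
    have := congrArg Matrix.det h2
    rw [Matrix.det_mul, hVdet, mul_one, Matrix.det_one] at this
    exact this
  have hw2 : w^2 = 1 := by
    have hdet2 : Um.det = (w • V).det := by rw [← hUm]
    rw [hdetU, Matrix.det_smul, hVdet, mul_one] at hdet2
    simpa using hdet2.symm
  have hfac : (w - 1) * (w + 1) = 0 := by linear_combination hw2
  intro i j
  have : Um i j = w * V i j := by rw [hUm]; simp
  rw [this]
  rcases mul_eq_zero.mp hfac with hc | hc
  · have : w = 1 := by linear_combination hc
    rw [this, one_mul]; exact hVF i j
  · have : w = -1 := by linear_combination hc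
    rw [this]
    simpa using neg_mem (hVF i j)

/-! ### construction of the intertwiner V -/

lemma construct (k : ℕ) (Am Bm Ej Eij : Mat) (c₁ c₂ c₃ : ℝ) (n : ℤ) (u v : ℂ)
    (huv : u * v = 1) (huu : u * u = ω k ^ n) (hvv : v * v = ω k ^ (-n))
    (huF : u ∈ FF (k+1)) (hvF : v ∈ FF (k+1))
    (hEj1 : Ej * Eij = 1) (hEj2 : Eij * Ej = 1) (hEjdet : Ej.det = 1)
    (hEjF : entriesIn Ej (FF (k+1))) (hEijF : entriesIn Eij (FF (k+1)))
    (hA : Am = Ej * (!![v,0;0,u] * Xsf * !![u,0;0,v]) * Eij)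
    (hcm : Eij * Bm * Ej = mat c₁ c₂ c₃) (hNN : NN k c₁ c₂ c₃)
    (hBA : Bm * Am + Am * Bm = 0) :
    ∃ V Vi : Mat, V * Vi = 1 ∧ Vi * V = 1 ∧ V * (Xsf * Vi) = Am ∧ V * (Zsf * Vi) = Bm ∧
      V.det = 1 ∧ entriesIn V (FF (k+1)) := by
  have hvu : v * u = 1 := by rw [mul_comm]; exact huv
  have hEidet : Ei.det = 1 := by
    have := congrArg Matrix.det EEi
    rwa [Matrix.det_mul, E_det, one_mul, Matrix.det_one] at this
  -- collapse lemmas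
  have cDDi : ∀ m : Mat, !![v,0;0,u] * (!![u,0;0,v] * m) = m := fun m => by
    rw [← mul_assoc, dinv v u hvu, one_mul]
  have cDiD : ∀ m : Mat, !![u,0;0,v] * (!![v,0;0,u] * m) = m := fun m => by
    rw [← mul_assoc, dinv u v huv, one_mul]
  have cEjEij : ∀ m : Mat, Ej * (Eij * m) = m := fun m => by
    rw [← mul_assoc, hEj1, one_mul]
  have cEijEj : ∀ m : Mat, Eij * (Ej * m) = m := fun m => by
    rw [← mul_assoc, hEj2, one_mul]
  have cEEi : ∀ m : Mat, E * (Ei * m) = m := fun m => by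
    rw [← mul_assoc, EEi, one_mul]
  have cEiE : ∀ m : Mat, Ei * (E * m) = m := fun m => by
    rw [← mul_assoc, EiE, one_mul]
  have hAm' : Am = Ej * (!![v,0;0,u] * (Xsf * (!![u,0;0,v] * Eij))) := by
    rw [hA]; simp only [mul_assoc]
  have hmatc : mat c₁ c₂ c₃ = Eij * (Bm * Ej) := by
    rw [← hcm]; simp only [mul_assoc]
  have hBm' : Bm = Ej * (mat c₁ c₂ c₃ * Eij) := by
    rw [hmatc]
    simp only [mul_assoc]
    rw [hEj1, mul_one, cEjEij]
  have hXf : Xsf = !![u,0;0,v] * (Eij * (Am * (Ej * !![v,0;0,u]))) := by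
    rw [hAm']
    simp only [mul_assoc, cEijEj, cDiD]
    rw [dinv u v huv, mul_one]
  -- the anticommutation relation
  have hS0 : (!![u,0;0,v] * (mat c₁ c₂ c₃ * !![v,0;0,u])) * Xsf
      + Xsf * (!![u,0;0,v] * (mat c₁ c₂ c₃ * !![v,0;0,u])) = 0 := by
    have e1 : (!![u,0;0,v] * (mat c₁ c₂ c₃ * !![v,0;0,u])) * Xsf
        = !![u,0;0,v] * (Eij * ((Bm * Am) * (Ej * !![v,0;0,u]))) := by
      rw [hmatc]
      conv_lhs => rw [hXf]
      simp only [mul_assoc, cDDi, cDiD, cEjEij, cEijEj]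
    have e2 : Xsf * (!![u,0;0,v] * (mat c₁ c₂ c₃ * !![v,0;0,u]))
        = !![u,0;0,v] * (Eij * ((Am * Bm) * (Ej * !![v,0;0,u]))) := by
      rw [hmatc]
      conv_lhs => rw [hXf]
      simp only [mul_assoc, cDDi, cDiD, cEjEij, cEijEj]
    rw [e1, e2]
    have e3 : !![u,0;0,v] * (Eij * ((Bm * Am) * (Ej * !![v,0;0,u])))
        + !![u,0;0,v] * (Eij * ((Am * Bm) * (Ej * !![v,0;0,u])))
        = !![u,0;0,v] * (Eij * ((Bm * Am + Am * Bm) * (Ej * !![v,0;0,u]))) := by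
      simp only [add_mul, mul_add]
    rw [e3, hBA, zero_mul, mul_zero, mul_zero]
  have hB'mat : !![u,0;0,v] * (mat c₁ c₂ c₃ * !![v,0;0,u]) =
      !![-(c₃:ℂ)*I, ω k ^ n * (-(c₁:ℂ)*I - (c₂:ℂ));
         ω k ^ (-n) * (-(c₁:ℂ)*I + (c₂:ℂ)), (c₃:ℂ)*I] := by
    have := dconj u v (c₁:ℂ) (c₂:ℂ) (c₃:ℂ) huv
    rw [huu, hvv] at this
    rw [← this]
    simp only [mul_assoc]
    rfl
  rw [hB'mat] at hS0
  have hanti : ω k ^ n * (-(c₁:ℂ)*I - (c₂:ℂ)) + ω k ^ (-n) * (-(c₁:ℂ)*I + (c₂:ℂ)) = 0 := by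
    have h00 := congrFun (congrFun hS0 0) 0
    rw [Xsf_eq] at h00
    simp [Matrix.mul_apply, Fin.sum_univ_two] at h00
    rw [w_inv] at h00
    have : (-I) * (ω k ^ n * (-(c₁:ℂ)*I - (c₂:ℂ)) + ω k ^ (-n) * (-(c₁:ℂ)*I + (c₂:ℂ))) = 0 := by
      linear_combination h00
    rcases mul_eq_zero.mp this with hI0 | hok
    · exact absurd (neg_eq_zero.mp hI0) Complex.I_ne_zero
    · exact hok
  obtain ⟨m, heq1⟩ := core k c₁ c₂ c₃ n hNN hanti
  set μ : ℂ := ω k ^ (-n) * (-(c₁:ℂ)*I + (c₂:ℂ)) with hμ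
  have hμreal : (starRingEnd ℂ) μ = μ := by
    rw [hμ, _root_.map_mul, w_conj, map_add, _root_.map_mul, map_neg, Complex.conj_ofReal,
      Complex.conj_I, Complex.conj_ofReal]
    simp only [neg_neg]
    linear_combination -hanti
  have heq2 : μ - (c₃:ℂ)*I = ω k ^ (-m) := by
    calc μ - (c₃:ℂ)*I = (starRingEnd ℂ) (μ + (c₃:ℂ)*I) := by
          rw [map_add, hμreal, _root_.map_mul, Complex.conj_ofReal, Complex.conj_I]; ring
    _ = ω k ^ (-m) := by rw [heq1, w_conj]
  -- the second diagonal
  have hl1 : ω k ^ (m + 3*2^k) = -I * ω k ^ m := by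
    rw [← wmul, w_negI]; ring
  have hnegI3 : ω k ^ (-(3*(2:ℤ)^k)) = I := by
    have hu := w_unit k (3*2^k)
    rw [w_negI] at hu
    linear_combination I * hu + (ω k ^ (-(3*(2:ℤ)^k))) * Complex.I_sq
  have hl2 : ω k ^ (-(m + 3*2^k)) = I * ω k ^ (-m) := by
    rw [show -(m + 3*(2:ℤ)^k) = -m + -(3*2^k) by ring, ← wmul, hnegI3]; ring
  set x : ℂ := ω (k+1) ^ (-(m + 3*2^k)) with hx
  set y : ℂ := ω (k+1) ^ (m + 3*2^k) with hy
  have hxy : x * y = 1 := by rw [hx, hy, mul_comm]; exact w_unit (k+1) _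
  have hyx : y * x = 1 := by rw [mul_comm]; exact hxy
  have hxx : x * x = ω k ^ (-(m + 3*2^k)) := by rw [hx]; exact w_sq' k _
  have hyy : y * y = ω k ^ (m + 3*2^k) := by rw [hy]; exact w_sq' k _
  have cDlDli : ∀ w : Mat, !![x,0;0,y] * (!![y,0;0,x] * w) = w := fun w => by
    rw [← mul_assoc, dinv x y hxy, one_mul]
  have cDliDl : ∀ w : Mat, !![y,0;0,x] * (!![x,0;0,y] * w) = w := fun w => by
    rw [← mul_assoc, dinv y x hyx, one_mul]
  -- the key matrix identity : E * S * Ei = B'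
  have hSM3 : (!![0, -(x*x); y*y, 0] : Mat) = M3 μ (c₃:ℂ) 0 := by
    unfold M3
    refine eq22 (by ring) ?_ ?_ (by ring)
    · rw [hxx, hl2, ← heq2]
      first
        | linear_combination ((c₃:ℂ)) * Complex.I_sq
        | linear_combination (-(c₃:ℂ)) * Complex.I_sq
    · rw [hyy, hl1, ← heq1]
      first
        | linear_combination (-(c₃:ℂ)) * Complex.I_sq
        | linear_combination ((c₃:ℂ)) * Complex.I_sq
  have hBM3 : (!![-(c₃:ℂ)*I, ω k ^ n * (-(c₁:ℂ)*I - (c₂:ℂ));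
         ω k ^ (-n) * (-(c₁:ℂ)*I + (c₂:ℂ)), (c₃:ℂ)*I] : Mat) = M3 0 μ (c₃:ℂ) := by
    unfold M3
    refine eq22 (by ring) (by rw [hμ]; linear_combination hanti) (by rw [hμ]; ring) (by ring)
  have hESEi : E * (!![0, -(x*x); y*y, 0] : Mat) * Ei =
      !![-(c₃:ℂ)*I, ω k ^ n * (-(c₁:ℂ)*I - (c₂:ℂ));
         ω k ^ (-n) * (-(c₁:ℂ)*I + (c₂:ℂ)), (c₃:ℂ)*I] := by
    rw [hSM3, Econj, hBM3]
  -- conjugation collapses for V₂ pieces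
  have cEiXsfE : ∀ w : Mat, Ei * (Xsf * (E * w)) = Zsf * w := fun w => by
    rw [← mul_assoc, ← mul_assoc, EiXsfE]
  have cEZsfEi : ∀ w : Mat, E * (Zsf * (Ei * w)) = Xsf * w := fun w => by
    rw [← mul_assoc, ← mul_assoc, EZsfEi]
  have cEiZsfE : ∀ w : Mat, Ei * (Zsf * (E * w)) = M3 0 1 0 * w := fun w => by
    rw [← mul_assoc, ← mul_assoc, EiZsfE]
  have hDlZ : !![x,0;0,y] * Zsf * !![y,0;0,x] = Zsf := dZ x y hxy
  have cDlZ : ∀ w : Mat, !![x,0;0,y] * (Zsf * (!![y,0;0,x] * w)) = Zsf * w := fun w => by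
    rw [← mul_assoc, ← mul_assoc, hDlZ]
  have hDl310 : !![x,0;0,y] * M3 0 1 0 * !![y,0;0,x] = !![0, -(x*x); y*y, 0] := by
    rw [dconj x y 0 1 0 hxy]
    refine eq22 (by ring) (by ring) (by ring) (by ring)
  have cDl310 : ∀ w : Mat, !![x,0;0,y] * (M3 0 1 0 * (!![y,0;0,x] * w)) =
      !![0, -(x*x); y*y, 0] * w := fun w => by
    rw [← mul_assoc, ← mul_assoc, hDl310]
  have cESEi : ∀ w : Mat, E * ((!![0, -(x*x); y*y, 0] : Mat) * (Ei * w)) =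
      !![-(c₃:ℂ)*I, ω k ^ n * (-(c₁:ℂ)*I - (c₂:ℂ));
         ω k ^ (-n) * (-(c₁:ℂ)*I + (c₂:ℂ)), (c₃:ℂ)*I] * w := fun w => by
    rw [← mul_assoc, ← mul_assoc, hESEi]
  refine ⟨Ej * (!![v,0;0,u] * (E * (!![x,0;0,y] * Ei))),
          E * (!![y,0;0,x] * (Ei * (!![u,0;0,v] * Eij))), ?_, ?_, ?_, ?_, ?_, ?_⟩
  · simp only [mul_assoc, cEiE, cDlDli, cEEi, cDDi]
    exact hEj1
  · simp only [mul_assoc, cEijEj, cDiD, cEiE, cDliDl]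
    exact EEi
  · simp only [mul_assoc, cEiXsfE, cDlZ, cEZsfEi]
    exact hAm'.symm
  · simp only [mul_assoc, cEiZsfE, cDl310, cESEi]
    rw [← hB'mat]
    simp only [mul_assoc, cDDi, cDiD]
    exact hBm'.symm
  · simp only [Matrix.det_mul]
    rw [hEjdet, E_det, hEidet, ddet v u hvu, ddet x y hxy]
    norm_num
  · have hxF : x ∈ FF (k+1) := by rw [hx]; exact wpowFF _ _
    have hyF : y ∈ FF (k+1) := by rw [hy]; exact wpowFF _ _
    exact entriesIn_mul hEjF (entriesIn_mul
      (entriesIn_of hvF (zero_mem _) (zero_mem _) huF)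
      (entriesIn_mul (E_FF _) (entriesIn_mul
        (entriesIn_of hxF (zero_mem _) (zero_mem _) hyF) (Ei_FF _))))


/-! ### squares of conjugates -/

lemma conj_invol (Um P : Mat) (h1 : star Um * Um = 1) (h2 : Um * star Um = 1)
    (hP : P * P = -1) : (Um * P * star Um) * (Um * P * star Um) = -1 := by
  have c1 : ∀ m : Mat, star Um * (Um * m) = m := fun m => by rw [← mul_assoc, h1, one_mul]
  calc (Um * P * star Um) * (Um * P * star Um)
      = Um * (P * (star Um * (Um * (P * star Um)))) := by simp only [mul_assoc]
  _ = Um * (P * (P * star Um)) := by rw [c1]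
  _ = Um * ((P * P) * star Um) := by simp only [mul_assoc]
  _ = -(Um * star Um) := by rw [hP]; simp only [neg_mul, mul_neg, one_mul]
  _ = -1 := by rw [h2]

/-! ### the main entries lemma -/

lemma main_entries : ∀ (k : ℕ) (U : UG), U ∈ cliffordHierarchy k →
    entriesIn (U : Mat) (FF k) := by
  intro k U hU
  cases k with
  | zero =>
    have hp := pauli_norm U hU
    have hXZ : Xsf * Zsf = !![0,1;-1,0] := by
      rw [Xsf_eq, Zsf_eq, Matrix.mul_fin_two]; norm_num
    intro i j
    rcases hp with h|h|h|h|h|h|h|h <;> rw [h] <;> fin_cases i <;> fin_cases j <;>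
      simp [Xsf_eq, Zsf_eq, hXZ, Matrix.one_apply] <;>
      first
        | exact zero_mem _
        | exact one_mem _
        | exact neg_mem (one_mem _)
        | exact IFF 0
        | exact neg_mem (IFF 0)
  | succ k =>
    obtain ⟨hdet, hconj⟩ := hU
    have hst1 := coe_star_mul U
    have hst2 := coe_mul_star U
    have cS : ∀ m : Mat, star (U:Mat) * ((U:Mat) * m) = m := fun m => by
      rw [← mul_assoc, hst1, one_mul]
    -- the coerced conjugates
    have hAco : ((U * xu * U⁻¹ : UG) : Mat) = (U:Mat) * Xsf * star (U:Mat) := rfl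
    have hBco : ((U * zu * U⁻¹ : UG) : Mat) = (U:Mat) * Zsf * star (U:Mat) := rfl
    have hA2 : ((U * xu * U⁻¹ : UG) : Mat) * ((U * xu * U⁻¹ : UG) : Mat) = -1 := by
      rw [hAco]; exact conj_invol _ _ hst1 hst2 Xsf_sq
    have hB2 : ((U * zu * U⁻¹ : UG) : Mat) * ((U * zu * U⁻¹ : UG) : Mat) = -1 := by
      rw [hBco]; exact conj_invol _ _ hst1 hst2 Zsf_sq
    obtain ⟨a₁, a₂, a₃, hNNa, hAmat⟩ := Tclass k _ (hconj xu xu_mem) hA2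
    obtain ⟨b₁, b₂, b₃, hNNb, hBmat⟩ := Tclass k _ (hconj zu zu_mem) hB2
    rw [hAco] at hAmat
    rw [hBco] at hBmat
    -- conjugation relations
    have hUX : (U:Mat) * Xsf = mat a₁ a₂ a₃ * (U:Mat) := by
      rw [← hAmat]
      simp only [mul_assoc]
      rw [hst1, mul_one]
    have hUZ : (U:Mat) * Zsf = mat b₁ b₂ b₃ * (U:Mat) := by
      rw [← hBmat]
      simp only [mul_assoc]
      rw [hst1, mul_one]
    -- anticommutation
    have hBA : mat b₁ b₂ b₃ * mat a₁ a₂ a₃ + mat a₁ a₂ a₃ * mat b₁ b₂ b₃ = 0 := by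
      have e1 : mat a₁ a₂ a₃ * mat b₁ b₂ b₃ = (U:Mat) * ((Xsf * Zsf) * star (U:Mat)) := by
        rw [← hAmat, ← hBmat]
        simp only [mul_assoc, cS]
      have e2 : mat b₁ b₂ b₃ * mat a₁ a₂ a₃ = (U:Mat) * ((Zsf * Xsf) * star (U:Mat)) := by
        rw [← hAmat, ← hBmat]
        simp only [mul_assoc, cS]
      rw [e1, e2, ZX_rel]
      simp only [neg_mul, mul_neg]
      exact neg_add_cancel _
    -- pattern analysis of the X-conjugate
    obtain ⟨n, hpat⟩ := patA hNNa
    have huv : ω (k+1) ^ n * ω (k+1) ^ (-n) = 1 := w_unit (k+1) n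
    have huu : ω (k+1) ^ n * ω (k+1) ^ n = ω k ^ n := w_sq' k n
    have hvv : ω (k+1) ^ (-n) * ω (k+1) ^ (-n) = ω k ^ (-n) := w_sq' k (-n)
    have huF : ω (k+1) ^ n ∈ FF (k+1) := wpowFF _ _
    have hvF : ω (k+1) ^ (-n) ∈ FF (k+1) := wpowFF _ _
    have hEidet : Ei.det = 1 := by
      have := congrArg Matrix.det EEi
      rwa [Matrix.det_mul, E_det, one_mul, Matrix.det_one] at this
    rcases hpat with hcase | hcase | hcase
    · -- trivial frame
      obtain ⟨V, Vi, p1, p2, p3, p4, p5, p6⟩ :=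
        construct k (mat a₁ a₂ a₃) (mat b₁ b₂ b₃) 1 1 b₁ b₂ b₃ n _ _ huv huu hvv huF hvF
          (one_mul 1) (one_mul 1) Matrix.det_one
          (fun i j => by fin_cases i <;> fin_cases j <;>
            simp [Matrix.one_apply] <;> first | exact zero_mem _ | exact one_mem _)
          (fun i j => by fin_cases i <;> fin_cases j <;>
            simp [Matrix.one_apply] <;> first | exact zero_mem _ | exact one_mem _)
          (by rw [one_mul, mul_one, Dz_X]; exact hcase)
          (by rw [one_mul, mul_one]) hNNb hBA
      exact finishW (FF (k+1)) _ _ _ V Vi p1 p2 p3 p4 p5 p6 hdet hUX hUZ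
    · -- frame E
      obtain ⟨V, Vi, p1, p2, p3, p4, p5, p6⟩ :=
        construct k (mat a₁ a₂ a₃) (mat b₁ b₂ b₃) E Ei b₂ b₃ b₁ n _ _ huv huu hvv huF hvF
          EEi EiE E_det (E_FF _) (Ei_FF _)
          (by rw [Dz_X]; exact hcase)
          (Econj' (b₁:ℂ) (b₂:ℂ) (b₃:ℂ)) (NN_cyc hNNb) hBA
      exact finishW (FF (k+1)) _ _ _ V Vi p1 p2 p3 p4 p5 p6 hdet hUX hUZ
    · -- frame E²
      have hEE1 : (E*E) * (Ei*Ei) = 1 := by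
        calc (E*E) * (Ei*Ei) = E * ((E * Ei) * Ei) := by simp only [mul_assoc]
        _ = 1 := by rw [EEi, one_mul, EEi]
      have hEE2 : (Ei*Ei) * (E*E) = 1 := by
        calc (Ei*Ei) * (E*E) = Ei * ((Ei * E) * E) := by simp only [mul_assoc]
        _ = 1 := by rw [EiE, one_mul, EiE]
      have hEEdet : (E*E).det = 1 := by rw [Matrix.det_mul, E_det, one_mul]
      have hcm2 : (Ei*Ei) * mat b₁ b₂ b₃ * (E*E) = mat b₃ b₁ b₂ := by
        calc (Ei*Ei) * mat b₁ b₂ b₃ * (E*E)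
            = Ei * (Ei * mat b₁ b₂ b₃ * E) * E := by simp only [mul_assoc]
        _ = Ei * mat b₂ b₃ b₁ * E := by rw [Econj'_mat]
        _ = mat b₃ b₁ b₂ := Econj'_mat b₂ b₃ b₁
      have hA2' : mat a₁ a₂ a₃ = (E*E) *
          (!![ω (k+1) ^ (-n),0;0,ω (k+1) ^ n] * Xsf * !![ω (k+1) ^ n,0;0,ω (k+1) ^ (-n)])
          * (Ei*Ei) := by
        rw [Dz_X, hcase]
        simp only [mul_assoc]
      obtain ⟨V, Vi, p1, p2, p3, p4, p5, p6⟩ :=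
        construct k (mat a₁ a₂ a₃) (mat b₁ b₂ b₃) (E*E) (Ei*Ei) b₃ b₁ b₂ n _ _ huv huu hvv
          huF hvF hEE1 hEE2 hEEdet
          (entriesIn_mul (E_FF _) (E_FF _)) (entriesIn_mul (Ei_FF _) (Ei_FF _))
          hA2' hcm2 (NN_cyc (NN_cyc hNNb)) hBA
      exact finishW (FF (k+1)) _ _ _ V Vi p1 p2 p3 p4 p5 p6 hdet hUX hUZ

end CHAux

/-- any element of SU(2) lying in the level C^(r) (here
`cliffordHierarchy (r-1)`, i.e. index k corresponds to r = k+1) of the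
single-qubit Clifford hierarchy has all its matrix entries in the cyclotomic
field ℚ(ζ_{2^{r+1}}), realized inside ℂ as ℚ(e^{2πi/2^{r+1}}). -/
theorem cliffordHierarchy_entries_mem_cyclotomic (k : ℕ)
    (U : Matrix.unitaryGroup (Fin 2) ℂ) (hU : U ∈ cliffordHierarchy k)
    (i j : Fin 2) :
    (U : Matrix (Fin 2) (Fin 2) ℂ) i j ∈
      IntermediateField.adjoin ℚ
        ({Complex.exp (2 * Real.pi * Complex.I / (2 ^ (k + 2)))} : Set ℂ) := by
  exact CHAux.main_entries k U hU i j

end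
end

section
/- The two specified 7-qubit codewords |0̄⟩ = (√15/8)|D₀⁷⟩ + (√7/8)|D₂⁷⟩ + (√21/8)|D₄⁷⟩ - (√21/8)|D₆⁷⟩ and |1̄⟩ = -(√21/8)|D₁⁷⟩ + (√21/8)|D₃⁷⟩ + (√7/8)|D₅⁷⟩ + (√15/8)|D₇⁷⟩ are orthonormal, and satisfy X^⊗7 |0̄⟩ = |1̄⟩ and Z^⊗7 |0̄⟩ = |0̄⟩, Z^⊗7 |1̄⟩ = -|1̄⟩. -/
open Finset

noncomputable section

/-- Hamming weight of a length-n bit string. -/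
def wt {n : ℕ} (s : Fin n → Fin 2) : ℕ := (Finset.univ.filter fun i => s i = 1).card

/-- The normalized n-qubit Dicke state of weight w. -/
def Dicke (n w : ℕ) : (Fin n → Fin 2) → ℂ :=
  fun s => if wt s = w then (1 / (Real.sqrt (n.choose w) : ℂ)) else 0

/-- Bit flip. -/
def bitflip : Fin 2 → Fin 2 := fun b => if b = 0 then 1 else 0

/-- The transversal Pauli operator X^⊗n. -/
def xAll (n : ℕ) (ψ : (Fin n → Fin 2) → ℂ) : (Fin n → Fin 2) → ℂ :=
  fun s => ψ fun i => bitflip (s i)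

/-- The transversal Pauli operator Z^⊗n. -/
def zAll (n : ℕ) (ψ : (Fin n → Fin 2) → ℂ) : (Fin n → Fin 2) → ℂ :=
  fun s => (-1 : ℂ) ^ wt s * ψ s

/-- The Hermitian inner product on the 7-qubit Hilbert space. -/
def qInner (u v : (Fin 7 → Fin 2) → ℂ) : ℂ :=
  ∑ s : Fin 7 → Fin 2, (starRingEnd ℂ) (u s) * v s

/-- The logical zero codeword |0̄⟩ of the ((7,2,3)) binary icosahedral code. -/
def ket0 : (Fin 7 → Fin 2) → ℂ :=
  fun s => (Real.sqrt 15 / 8 : ℂ) * Dicke 7 0 s + (Real.sqrt 7 / 8 : ℂ) * Dicke 7 2 s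
    + (Real.sqrt 21 / 8 : ℂ) * Dicke 7 4 s - (Real.sqrt 21 / 8 : ℂ) * Dicke 7 6 s

/-- The logical one codeword |1̄⟩ of the ((7,2,3)) binary icosahedral code. -/
def ket1 : (Fin 7 → Fin 2) → ℂ :=
  fun s => -(Real.sqrt 21 / 8 : ℂ) * Dicke 7 1 s + (Real.sqrt 21 / 8 : ℂ) * Dicke 7 3 s
    + (Real.sqrt 7 / 8 : ℂ) * Dicke 7 5 s + (Real.sqrt 15 / 8 : ℂ) * Dicke 7 7 s

/-! ### Auxiliary machinery -/

/-- The value of `Dicke 7 k` on a string of weight `w`. -/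
def amp (w k : ℕ) : ℂ := if w = k then (1 / (Real.sqrt (Nat.choose 7 k) : ℂ)) else 0

/-- The amplitude of `ket0` on a string of weight `w`. -/
def c0 (w : ℕ) : ℂ := (Real.sqrt 15 / 8 : ℂ) * amp w 0 + (Real.sqrt 7 / 8 : ℂ) * amp w 2
    + (Real.sqrt 21 / 8 : ℂ) * amp w 4 - (Real.sqrt 21 / 8 : ℂ) * amp w 6

/-- The amplitude of `ket1` on a string of weight `w`. -/
def c1 (w : ℕ) : ℂ := -(Real.sqrt 21 / 8 : ℂ) * amp w 1 + (Real.sqrt 21 / 8 : ℂ) * amp w 3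
    + (Real.sqrt 7 / 8 : ℂ) * amp w 5 + (Real.sqrt 15 / 8 : ℂ) * amp w 7

lemma ket0_eq (s : Fin 7 → Fin 2) : ket0 s = c0 (wt s) := rfl
lemma ket1_eq (s : Fin 7 → Fin 2) : ket1 s = c1 (wt s) := rfl

lemma wt_le (s : Fin 7 → Fin 2) : wt s ≤ 7 := by
  have := Finset.card_filter_le (Finset.univ : Finset (Fin 7)) (fun i => s i = 1)
  simpa [wt] using this

lemma wt_flip (s : Fin 7 → Fin 2) : wt (fun i => bitflip (s i)) = 7 - wt s := by
  have hb : ∀ b : Fin 2, (bitflip b = 1) ↔ ¬ (b = 1) := by decide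
  have key : wt s + wt (fun i => bitflip (s i)) = 7 := by
    unfold wt
    have h2 : (Finset.univ.filter fun i : Fin 7 => bitflip (s i) = 1)
        = (Finset.univ.filter fun i => ¬ (s i = 1)) := by
      apply Finset.filter_congr; intro i _; simp [hb]
    rw [h2, Finset.card_filter_add_card_filter_not]
    simp
  omega

lemma sum_wt (f : ℕ → ℂ) : ∑ s : Fin 7 → Fin 2, f (wt s)
    = ∑ w ∈ Finset.range 8, ((Finset.univ.filter fun s : Fin 7 → Fin 2 => wt s = w).card : ℂ) * f w := by
  rw [← Finset.sum_fiberwise_of_maps_to (g := wt) (t := Finset.range 8)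
    (fun s _ => Finset.mem_range.mpr (Nat.lt_succ_of_le (wt_le s)))]
  refine Finset.sum_congr rfl fun w _ => ?_
  rw [Finset.sum_congr rfl (fun s hs => by rw [(Finset.mem_filter.mp hs).2]),
    Finset.sum_const, nsmul_eq_mul]

lemma N0 : (Finset.univ.filter fun s : Fin 7 → Fin 2 => wt s = 0).card = 1 := by decide
lemma N1 : (Finset.univ.filter fun s : Fin 7 → Fin 2 => wt s = 1).card = 7 := by decide
lemma N2 : (Finset.univ.filter fun s : Fin 7 → Fin 2 => wt s = 2).card = 21 := by decide
lemma N3 : (Finset.univ.filter fun s : Fin 7 → Fin 2 => wt s = 3).card = 35 := by decide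
lemma N4 : (Finset.univ.filter fun s : Fin 7 → Fin 2 => wt s = 4).card = 35 := by decide
lemma N5 : (Finset.univ.filter fun s : Fin 7 → Fin 2 => wt s = 5).card = 21 := by decide
lemma N6 : (Finset.univ.filter fun s : Fin 7 → Fin 2 => wt s = 6).card = 7 := by decide
lemma N7 : (Finset.univ.filter fun s : Fin 7 → Fin 2 => wt s = 7).card = 1 := by decide

lemma sqC (a : ℝ) (ha : 0 ≤ a) : (Real.sqrt a : ℂ)^2 = (a : ℂ) := by
  rw [pow_two, ← Complex.ofReal_mul, Real.mul_self_sqrt ha]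

lemma sqrt_ne (a : ℝ) (ha : 0 < a) : (Real.sqrt a : ℂ) ≠ 0 := by
  simpa using (Real.sqrt_ne_zero'.mpr ha)

lemma norm0 : qInner ket0 ket0 = 1 := by
  have h : qInner ket0 ket0 = ∑ s : Fin 7 → Fin 2,
      (fun w => (starRingEnd ℂ) (c0 w) * c0 w) (wt s) := by
    simp only [qInner, ket0_eq]
  rw [h, sum_wt (fun w => (starRingEnd ℂ) (c0 w) * c0 w)]
  simp only [Finset.sum_range_succ, Finset.sum_range_zero, N0, N1, N2, N3, N4, N5, N6, N7]
  have c2 : Nat.choose 7 2 = 21 := by decide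
  have c4 : Nat.choose 7 4 = 35 := by decide
  norm_num [c0, amp, Complex.conj_ofReal, map_ofNat, c2, c4]
  have p15 := sqC 15 (by norm_num); have p7 := sqC 7 (by norm_num)
  have p21 := sqC 21 (by norm_num); have p35 := sqC 35 (by norm_num)
  have n7 := sqrt_ne 7 (by norm_num); have n21 := sqrt_ne 21 (by norm_num)
  have n35 := sqrt_ne 35 (by norm_num)
  have i21 : ((Real.sqrt 21 : ℂ))⁻¹^2 = (21:ℂ)⁻¹ := by rw [inv_pow, p21]; norm_num
  have i35 : ((Real.sqrt 35 : ℂ))⁻¹^2 = (35:ℂ)⁻¹ := by rw [inv_pow, p35]; norm_num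
  field_simp
  ring_nf
  simp only [show ((Real.sqrt 21:ℂ))^4 = ((Real.sqrt 21:ℂ)^2)^2 from by ring,
    show ((Real.sqrt 7:ℂ))^4 = ((Real.sqrt 7:ℂ)^2)^2 from by ring, p15, p7, p21, p35, i21, i35]
  norm_num

lemma norm1 : qInner ket1 ket1 = 1 := by
  have h : qInner ket1 ket1 = ∑ s : Fin 7 → Fin 2,
      (fun w => (starRingEnd ℂ) (c1 w) * c1 w) (wt s) := by
    simp only [qInner, ket1_eq]
  rw [h, sum_wt (fun w => (starRingEnd ℂ) (c1 w) * c1 w)]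
  simp only [Finset.sum_range_succ, Finset.sum_range_zero, N0, N1, N2, N3, N4, N5, N6, N7]
  have c3 : Nat.choose 7 3 = 35 := by decide
  have c5 : Nat.choose 7 5 = 21 := by decide
  norm_num [c1, amp, Complex.conj_ofReal, map_ofNat, c3, c5]
  have p15 := sqC 15 (by norm_num); have p7 := sqC 7 (by norm_num)
  have p21 := sqC 21 (by norm_num); have p35 := sqC 35 (by norm_num)
  have n7 := sqrt_ne 7 (by norm_num); have n21 := sqrt_ne 21 (by norm_num)
  have n35 := sqrt_ne 35 (by norm_num)
  have i21 : ((Real.sqrt 21 : ℂ))⁻¹^2 = (21:ℂ)⁻¹ := by rw [inv_pow, p21]; norm_num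
  have i35 : ((Real.sqrt 35 : ℂ))⁻¹^2 = (35:ℂ)⁻¹ := by rw [inv_pow, p35]; norm_num
  have i7 : ((Real.sqrt 7 : ℂ))⁻¹^2 = (7:ℂ)⁻¹ := by rw [inv_pow, p7]; norm_num
  field_simp
  ring_nf
  simp only [show ((Real.sqrt 21:ℂ))^4 = ((Real.sqrt 21:ℂ)^2)^2 from by ring,
    show ((Real.sqrt 7:ℂ))^4 = ((Real.sqrt 7:ℂ)^2)^2 from by ring,
    show ((Real.sqrt 35:ℂ))^4 = ((Real.sqrt 35:ℂ)^2)^2 from by ring,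
    p15, p7, p21, p35, i21, i35, i7]
  norm_num

lemma orth : qInner ket0 ket1 = 0 := by
  have key : ∀ w ≤ 7, (starRingEnd ℂ) (c0 w) * c1 w = 0 := by
    intro w hw
    interval_cases w <;> simp [c0, c1, amp]
  unfold qInner
  apply Finset.sum_eq_zero
  intro s _
  rw [ket0_eq, ket1_eq]
  exact key _ (wt_le s)

lemma xket : xAll 7 ket0 = ket1 := by
  have key : ∀ w ≤ 7, c0 (7 - w) = c1 w := by
    have e1 : Nat.choose 7 6 = Nat.choose 7 1 := by decide
    have e3 : Nat.choose 7 4 = Nat.choose 7 3 := by decide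
    have e5 : Nat.choose 7 2 = Nat.choose 7 5 := by decide
    intro w hw
    interval_cases w <;> simp [c0, c1, amp, e1, e3, e5]
  funext s
  show ket0 (fun i => bitflip (s i)) = ket1 s
  rw [ket0_eq, ket1_eq, wt_flip]
  exact key _ (wt_le s)

lemma zket0 : zAll 7 ket0 = ket0 := by
  have key : ∀ w ≤ 7, (-1 : ℂ) ^ w * c0 w = c0 w := by
    intro w hw
    interval_cases w <;> norm_num [c0, amp]
  funext s
  show (-1 : ℂ) ^ wt s * ket0 s = ket0 s
  rw [ket0_eq]
  exact key _ (wt_le s)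

lemma zket1 : zAll 7 ket1 = -ket1 := by
  have key : ∀ w ≤ 7, (-1 : ℂ) ^ w * c1 w = -(c1 w) := by
    intro w hw
    interval_cases w <;> norm_num [c1, amp]
  funext s
  show (-1 : ℂ) ^ wt s * ket1 s = -(ket1 s)
  rw [ket1_eq]
  exact key _ (wt_le s)

/-- the two 7-qubit codewords |0̄⟩ and |1̄⟩ are orthonormal and
satisfy X^⊗7 |0̄⟩ = |1̄⟩, Z^⊗7 |0̄⟩ = |0̄⟩ and Z^⊗7 |1̄⟩ = -|1̄⟩. -/
theorem icosahedral_code_codewords :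
    qInner ket0 ket0 = 1 ∧ qInner ket1 ket1 = 1 ∧ qInner ket0 ket1 = 0 ∧
    xAll 7 ket0 = ket1 ∧ zAll 7 ket0 = ket0 ∧ zAll 7 ket1 = -ket1 := by
  exact ⟨norm0, norm1, orth, xket, zket0, zket1⟩

end
end

section
/- Suppose a spin-j code with real codewords |0̄⟩, |1̄⟩ ∈ ℝ^{2j+1} satisfies X|ū⟩ = |ū+1 mod 2⟩ and Z|ū⟩ = (-1)^u |ū⟩, where X and Z are the spin-j representations of π-rotations about x and z (times i). Then for angular momentum operators J_α, J_β ∈ {J₊, J₋, J_z}: ⟨ū| J_α J_β |v̄⟩ = (-1)^{u+v} ⟨v̄+1| J_β J_α |ū+1⟩, where indices are mod 2. -/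
open Matrix

/-- For real vectors and a real matrix, the "inner product" symmetry is a pure
transpose identity. -/
lemma real_dot_transpose {N : ℕ} (M : Matrix (Fin N) (Fin N) ℂ)
    (x y : Fin N → ℂ) (hM : M.map (starRingEnd ℂ) = M)
    (hx : ∀ i, (starRingEnd ℂ) (x i) = x i)
    (hy : ∀ i, (starRingEnd ℂ) (y i) = y i) :
    star x ⬝ᵥ M.mulVec y = star y ⬝ᵥ Mᴴ.mulVec x := by
  have hxs : star x = x := funext fun i => hx i
  have hys : star y = y := funext fun i => hy i
  have hMT : Mᴴ = Mᵀ := by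
    ext i j
    simpa [Matrix.conjTranspose_apply] using congrArg (fun m => m j i) hM
  rw [hxs, hys, hMT, dotProduct_mulVec, mulVec_transpose, dotProduct_comm]

lemma dot_conj_unitary {N : ℕ} (W M : Matrix (Fin N) (Fin N) ℂ)
    (x y : Fin N → ℂ) :
    star (W.mulVec x) ⬝ᵥ M.mulVec (W.mulVec y)
      = star x ⬝ᵥ (Wᴴ * M * W).mulVec y := by
  rw [star_mulVec, Matrix.mulVec_mulVec, dotProduct_mulVec, vecMul_vecMul,
    dotProduct_mulVec, Matrix.mul_assoc]

/-- Core symmetry lemma. -/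
lemma key_symmetry {N : ℕ} (W A B : Matrix (Fin N) (Fin N) ℂ)
    (c : Fin 2 → (Fin N → ℂ))
    (hcreal : ∀ u i, (starRingEnd ℂ) (c u i) = c u i)
    (hAr : A.map (starRingEnd ℂ) = A) (hBr : B.map (starRingEnd ℂ) = B)
    (hWA : Wᴴ * A * W = -Aᴴ) (hWB : Wᴴ * B * W = -Bᴴ)
    (hWW : W * Wᴴ = 1)
    (hWc : ∀ u : Fin 2, W.mulVec (c u) = ((-1 : ℂ) ^ (u : ℕ)) • c (u + 1))
    (u v : Fin 2) :
    star (c u) ⬝ᵥ (A * B).mulVec (c v)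
      = (-1 : ℂ) ^ ((u : ℕ) + (v : ℕ)) *
          (star (c (v + 1)) ⬝ᵥ (B * A).mulVec (c (u + 1))) := by
  have hc1 : ∀ w : Fin 2, c (w + 1) = ((-1 : ℂ) ^ (w : ℕ)) • W.mulVec (c w) := by
    intro w
    rw [hWc, smul_smul, ← pow_add, Even.neg_one_pow ⟨(w : ℕ), rfl⟩, one_smul]
  have hWBA : Wᴴ * (B * A) * W = (A * B)ᴴ := by
    have h : Wᴴ * (B * A) * W = (Wᴴ * B * W) * (Wᴴ * A * W) := by
      calc Wᴴ * (B * A) * W = Wᴴ * B * (W * Wᴴ) * A * W := by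
            rw [hWW]; noncomm_ring
        _ = (Wᴴ * B * W) * (Wᴴ * A * W) := by noncomm_ring
    rw [h, hWA, hWB, Matrix.conjTranspose_mul]
    simp [Matrix.mul_neg, Matrix.neg_mul]
  have hABr : (A * B).map (starRingEnd ℂ) = A * B := by
    rw [Matrix.map_mul, hAr, hBr]
  have hstep : star (c (v + 1)) ⬝ᵥ (B * A).mulVec (c (u + 1))
      = (-1 : ℂ) ^ ((u : ℕ) + (v : ℕ)) *
          (star (c v) ⬝ᵥ (A * B)ᴴ.mulVec (c u)) := by
    rw [hc1 u, hc1 v, star_smul, Matrix.mulVec_smul, smul_dotProduct,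
      dotProduct_smul, dot_conj_unitary, hWBA]
    simp only [star_pow, star_neg, star_one, smul_eq_mul]
    rw [← mul_assoc, ← pow_add, add_comm (v : ℕ) (u : ℕ)]
  rw [hstep, ← mul_assoc, ← pow_add,
    Even.neg_one_pow ⟨(u : ℕ) + (v : ℕ), rfl⟩, one_mul]
  exact real_dot_transpose (A * B) (c u) (c v) hABr (hcreal u) (hcreal v)

/-- for a spin-j code (here an abstract (2j+1)-dimensional space
`Fin N`) with real codewords c 0 = |0̄⟩, c 1 = |1̄⟩ satisfying X|ū⟩ = |ū+1⟩ and
Z|ū⟩ = (-1)ᵘ|ū⟩, where X, Z are (i times) the spin-j representations of π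
rotations about the x and z axes, and J₊, J₋, J_z are the standard (real)
angular momentum operators with J_α† = J_{-α}, X† J_α X = (-1)^{α+1} J_{-α}
and Z† J_α Z = (-1)^α J_α, one has
⟨ū| J_α J_β |v̄⟩ = (-1)^{u+v} ⟨v̄+1| J_β J_α |ū+1⟩ (indices mod 2). -/
theorem spin_code_rank_two_symmetry (N : ℕ)
    (Jp Jm Jz Xr Zr : Matrix (Fin N) (Fin N) ℂ)
    (c : Fin 2 → (Fin N → ℂ))
    (hcreal : ∀ u i, (starRingEnd ℂ) (c u i) = c u i)
    (hJpreal : Jp.map (starRingEnd ℂ) = Jp)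
    (hJmreal : Jm.map (starRingEnd ℂ) = Jm)
    (hJzreal : Jz.map (starRingEnd ℂ) = Jz)
    (hadjp : Jpᴴ = Jm) (hadjz : Jzᴴ = Jz)
    (hXunit : Xrᴴ * Xr = 1) (hZunit : Zrᴴ * Zr = 1)
    (hXp : Xrᴴ * Jp * Xr = Jm) (hXz : Xrᴴ * Jz * Xr = -Jz) (hXm : Xrᴴ * Jm * Xr = Jp)
    (hZp : Zrᴴ * Jp * Zr = -Jp) (hZz : Zrᴴ * Jz * Zr = Jz) (hZm : Zrᴴ * Jm * Zr = -Jm)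
    (hX : ∀ u : Fin 2, Xr.mulVec (c u) = c (u + 1))
    (hZ : ∀ u : Fin 2, Zr.mulVec (c u) = ((-1 : ℂ) ^ (u : ℕ)) • c u) :
    ∀ u v : Fin 2, ∀ A ∈ ({Jp, Jm, Jz} : Set (Matrix (Fin N) (Fin N) ℂ)),
      ∀ B ∈ ({Jp, Jm, Jz} : Set (Matrix (Fin N) (Fin N) ℂ)),
        star (c u) ⬝ᵥ (A * B).mulVec (c v)
          = (-1 : ℂ) ^ ((u : ℕ) + (v : ℕ)) *
              (star (c (v + 1)) ⬝ᵥ (B * A).mulVec (c (u + 1))) := by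
  set W : Matrix (Fin N) (Fin N) ℂ := Xr * Zr with hWdef
  have hadjm : Jmᴴ = Jp := by rw [← hadjp, Matrix.conjTranspose_conjTranspose]
  have hWH : Wᴴ = Zrᴴ * Xrᴴ := by rw [hWdef, Matrix.conjTranspose_mul]
  have hWunit : Wᴴ * W = 1 := by
    rw [hWH, hWdef]
    calc Zrᴴ * Xrᴴ * (Xr * Zr) = Zrᴴ * (Xrᴴ * Xr) * Zr := by noncomm_ring
      _ = 1 := by rw [hXunit, Matrix.mul_one, hZunit]
  have hWW : W * Wᴴ = 1 := mul_eq_one_comm.mp hWunit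
  have hconj : ∀ M : Matrix (Fin N) (Fin N) ℂ,
      Wᴴ * M * W = Zrᴴ * (Xrᴴ * M * Xr) * Zr := by
    intro M; rw [hWH, hWdef]; noncomm_ring
  have hWp : Wᴴ * Jp * W = -Jpᴴ := by
    rw [hconj, hXp, hZm, hadjp]
  have hWm : Wᴴ * Jm * W = -Jmᴴ := by
    rw [hconj, hXm, hZp, hadjm]
  have hWz : Wᴴ * Jz * W = -Jzᴴ := by
    rw [hconj, hXz, hadjz, Matrix.mul_neg, Matrix.neg_mul, hZz]
  have hWc : ∀ u : Fin 2, W.mulVec (c u) = ((-1 : ℂ) ^ (u : ℕ)) • c (u + 1) := by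
    intro u
    rw [hWdef, ← Matrix.mulVec_mulVec, hZ, Matrix.mulVec_smul, hX]
  intro u v A hA B hB
  simp only [Set.mem_insert_iff, Set.mem_singleton_iff] at hA hB
  rcases hA with rfl | rfl | rfl <;> rcases hB with rfl | rfl | rfl
  · exact key_symmetry W _ _ c hcreal hJpreal hJpreal hWp hWp hWW hWc u v
  · exact key_symmetry W _ _ c hcreal hJpreal hJmreal hWp hWm hWW hWc u v
  · exact key_symmetry W _ _ c hcreal hJpreal hJzreal hWp hWz hWW hWc u v
  · exact key_symmetry W _ _ c hcreal hJmreal hJpreal hWm hWp hWW hWc u v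
  · exact key_symmetry W _ _ c hcreal hJmreal hJmreal hWm hWm hWW hWc u v
  · exact key_symmetry W _ _ c hcreal hJmreal hJzreal hWm hWz hWW hWc u v
  · exact key_symmetry W _ _ c hcreal hJzreal hJpreal hWz hWp hWW hWc u v
  · exact key_symmetry W _ _ c hcreal hJzreal hJmreal hWz hWm hWW hWc u v
  · exact key_symmetry W _ _ c hcreal hJzreal hJzreal hWz hWz hWW hWc u v
end
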